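/- arXiv:2407.14511 — 12 statements merged into one kernel-verified Lean document; each statement's English description precedes it below -/
import Mathlib

section
/- For every k ≥ 2 and positive integers n₁,…,n_k, the number of cyclic subgroups of the group ℤ_{n₁} × ⋯ × ℤ_{n_k} equals the sum over all tuples (d₁,…,d_k) with dᵢ ∣ nᵢ of φ(d₁)⋯φ(d_k)/φ(lcm(d₁,…,d_k)). -/
open Finset

/-- Group-by-fiber counting: the number of distinct values of `f` equals the sum
over all `a` of the reciprocal of the size of the fiber through `a`. -/
lemma sum_inv_fiber_card {α β : Type*} [Fintype α] [DecidableEq β] (f : α → β) :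
    ((Finset.univ.image f).card : ℚ) =
      ∑ a : α, 1 / ((Finset.univ.filter (fun x => f x = f a)).card : ℚ) := by
  rw [← Finset.sum_fiberwise_of_maps_to (g := f) (t := Finset.univ.image f)
      (fun x _ => Finset.mem_image_of_mem f (Finset.mem_univ x))]
  rw [Finset.card_eq_sum_ones (Finset.univ.image f)]
  push_cast
  refine Finset.sum_congr rfl fun b hb => ?_
  have hsum : ∑ x ∈ Finset.univ.filter (fun x => f x = b),
      (1 : ℚ) / ((Finset.univ.filter (fun y => f y = f x)).card : ℚ)
      = ∑ x ∈ Finset.univ.filter (fun x => f x = b),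
      (1 : ℚ) / ((Finset.univ.filter (fun y => f y = b)).card : ℚ) := by
    refine Finset.sum_congr rfl fun x hx => ?_
    rw [(Finset.mem_filter.mp hx).2]
  rw [hsum, Finset.sum_const, nsmul_eq_mul]
  have hne : (Finset.univ.filter (fun x => f x = b)).card ≠ 0 := by
    obtain ⟨a, _, rfl⟩ := Finset.mem_image.mp hb
    exact Finset.card_ne_zero_of_mem (Finset.mem_filter.mpr ⟨Finset.mem_univ a, rfl⟩)
  field_simp

/-- The additive order of an element of a product is the lcm of the orders. -/
lemma addOrderOf_pi {ι : Type*} [Fintype ι] {M : ι → Type*}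
    [∀ i, AddGroup (M i)] [∀ i, Finite (M i)] (g : ∀ i, M i) :
    addOrderOf g = Finset.univ.lcm (fun i => addOrderOf (g i)) := by
  have : Finite (∀ i, M i) := inferInstance
  refine Nat.dvd_antisymm ?_ ?_
  · rw [addOrderOf_dvd_iff_nsmul_eq_zero]
    funext i
    have hi : addOrderOf (g i) ∣ Finset.univ.lcm (fun i => addOrderOf (g i)) :=
      Finset.dvd_lcm (Finset.mem_univ i)
    have := addOrderOf_dvd_iff_nsmul_eq_zero.mp hi
    simpa using this
  · refine Finset.lcm_dvd fun i _ => ?_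
    rw [addOrderOf_dvd_iff_nsmul_eq_zero]
    have : (addOrderOf g) • g = 0 := addOrderOf_nsmul_eq_zero g
    exact congrFun this i

lemma isAddCyclic_zmultiples {G : Type*} [AddGroup G] (g : G) :
    IsAddCyclic (AddSubgroup.zmultiples g) := by
  refine ⟨⟨g, AddSubgroup.mem_zmultiples g⟩, fun x => ?_⟩
  obtain ⟨k, hk⟩ := x.2
  exact ⟨k, Subtype.ext (by simpa using hk)⟩

/-- The number of generators of the cyclic subgroup generated by `g` is
`φ(addOrderOf g)`. -/
lemma card_gen_eq_totient {G : Type*} [AddCommGroup G] [Fintype G] [DecidableEq G]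
    [DecidableEq (AddSubgroup G)] (g : G) :
    (Finset.univ.filter
      (fun h => AddSubgroup.zmultiples h = AddSubgroup.zmultiples g)).card
      = Nat.totient (addOrderOf g) := by
  classical
  set H := AddSubgroup.zmultiples g with hH
  haveI : IsAddCyclic H := isAddCyclic_zmultiples g
  have hcard : Fintype.card H = addOrderOf g := by
    rw [← Nat.card_eq_fintype_card, Nat.card_zmultiples]
  have key : ∀ h : G, AddSubgroup.zmultiples h = H ↔
      (h ∈ H ∧ addOrderOf h = addOrderOf g) := by
    intro h
    constructor
    · intro he
      refine ⟨he ▸ AddSubgroup.mem_zmultiples h, ?_⟩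
      rw [← Nat.card_zmultiples h, he, Nat.card_zmultiples]
    · rintro ⟨hmem, horder⟩
      refine AddSubgroup.eq_of_le_of_card_ge ?_ ?_
      · rwa [AddSubgroup.zmultiples_le]
      · have e1 : Nat.card (AddSubgroup.zmultiples h) = addOrderOf g := by
          rw [Nat.card_zmultiples, horder]
        have e2 : Nat.card H = addOrderOf g := by
          rw [hH, Nat.card_zmultiples]
        rw [e1, e2]
  have e1 : (Finset.univ.filter
      (fun h => AddSubgroup.zmultiples h = AddSubgroup.zmultiples g)).card
      = (Finset.univ.filter (fun x : H => addOrderOf x = addOrderOf g)).card := by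
    refine Finset.card_bij (fun h hh => ⟨h, ((key h).mp (Finset.mem_filter.mp hh).2).1⟩)
      ?_ ?_ ?_
    · intro h hh
      have := ((key h).mp (Finset.mem_filter.mp hh).2).2
      simp only [Finset.mem_filter, Finset.mem_univ, true_and]
      rw [AddSubgroup.addOrderOf_mk]
      exact this
    · intro a ha b hb hab
      exact Subtype.mk.injEq .. ▸ hab
    · intro x hx
      refine ⟨x, ?_, rfl⟩
      have hxo : addOrderOf (x : G) = addOrderOf g := by
        rw [AddSubgroup.addOrderOf_coe]
        exact (Finset.mem_filter.mp hx).2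
      exact Finset.mem_filter.mpr ⟨Finset.mem_univ _, (key x).mpr ⟨x.2, hxo⟩⟩
  rw [e1]
  have := IsAddCyclic.card_addOrderOf_eq_totient (α := H)
    (d := addOrderOf g) (by rw [hcard])
  simpa using this

theorem cyclic_subgroup_count (k : ℕ) (hk : 2 ≤ k) (n : Fin k → ℕ) (hn : ∀ i, 0 < n i) :
    (Nat.card {H : AddSubgroup (∀ i, ZMod (n i)) // ∃ g, H = AddSubgroup.closure {g}} : ℚ) =
      ∑ d ∈ Fintype.piFinset (fun i => (n i).divisors),
        (∏ i, (Nat.totient (d i) : ℚ)) / (Nat.totient (Finset.univ.lcm d) : ℚ) := by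
  classical
  haveI : ∀ i, NeZero (n i) := fun i => ⟨(hn i).ne'⟩
  set G := ∀ i, ZMod (n i) with hG
  set f : G → AddSubgroup G := fun g => AddSubgroup.closure {g} with hf
  -- Step 0 : Nat.card of the subtype equals the card of the image finset
  have h0 : (Nat.card {H : AddSubgroup G // ∃ g, H = AddSubgroup.closure {g}})
      = (Finset.univ.image f).card := by
    have e : {H : AddSubgroup G // ∃ g, H = AddSubgroup.closure {g}} ≃ Set.range f :=
      Equiv.subtypeEquivRight (fun H => by
        simp only [Set.mem_range, hf]
        exact ⟨fun ⟨g, h⟩ => ⟨g, h.symm⟩, fun ⟨g, h⟩ => ⟨g, h.symm⟩⟩)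
    rw [Nat.card_congr e, Nat.card_coe_set_eq, ← Set.ncard_coe_finset]
    congr 1
    rw [Finset.coe_image, Finset.coe_univ, Set.image_univ]
  -- Step 1 : count via reciprocal fibers
  have h1 : ((Finset.univ.image f).card : ℚ)
      = ∑ g : G, 1 / (Nat.totient (addOrderOf g) : ℚ) := by
    rw [sum_inv_fiber_card f]
    refine Finset.sum_congr rfl fun g _ => ?_
    congr 2
    have : (Finset.univ.filter (fun x => f x = f g))
        = (Finset.univ.filter
          (fun h => AddSubgroup.zmultiples h = AddSubgroup.zmultiples g)) := by
      refine Finset.filter_congr fun x _ => ?_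
      simp only [hf, ← AddSubgroup.zmultiples_eq_closure]
    rw [this, card_gen_eq_totient g]
  -- Step 2 : group elements by the tuple of component orders
  set o : G → (Fin k → ℕ) := fun g i => addOrderOf (g i) with ho
  have hmaps : ∀ g : G, o g ∈ Fintype.piFinset (fun i => (n i).divisors) := by
    intro g
    rw [Fintype.mem_piFinset]
    intro i
    rw [Nat.mem_divisors]
    refine ⟨?_, (hn i).ne'⟩
    have := addOrderOf_dvd_card (x := g i)
    rwa [ZMod.card] at this
  have h2 : ∑ g : G, (1 : ℚ) / (Nat.totient (addOrderOf g) : ℚ)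
      = ∑ d ∈ Fintype.piFinset (fun i => (n i).divisors),
        ∑ g ∈ Finset.univ.filter (fun g => o g = d),
          (1 : ℚ) / (Nat.totient (addOrderOf g) : ℚ) :=
    (Finset.sum_fiberwise_of_maps_to (fun g _ => hmaps g) _).symm
  rw [h0, h1, h2]
  refine Finset.sum_congr rfl fun d hd => ?_
  -- on each fiber, addOrderOf g = lcm d
  have horder : ∀ g ∈ Finset.univ.filter (fun g => o g = d),
      addOrderOf g = Finset.univ.lcm d := by
    intro g hg
    have := (Finset.mem_filter.mp hg).2
    rw [addOrderOf_pi g, ← this]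
  rw [Finset.sum_congr rfl (fun g hg => by rw [horder g hg])]
  rw [Finset.sum_const, nsmul_eq_mul]
  -- fiber cardinality
  have hfiber : (Finset.univ.filter (fun g => o g = d))
      = Fintype.piFinset (fun i =>
          Finset.univ.filter (fun x : ZMod (n i) => addOrderOf x = d i)) := by
    ext g
    simp only [Finset.mem_filter, Finset.mem_univ, true_and, funext_iff]
    constructor
    · intro h
      rw [Fintype.mem_piFinset]
      intro i
      simpa using h i
    · intro h i
      have := Fintype.mem_piFinset.mp h i
      simpa using this
  have hcardfiber : ((Finset.univ.filter (fun g => o g = d)).card : ℚ)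
      = ∏ i, (Nat.totient (d i) : ℚ) := by
    rw [hfiber, Fintype.card_piFinset]
    push_cast
    refine Finset.prod_congr rfl fun i _ => ?_
    congr 1
    have hdi : d i ∣ Fintype.card (ZMod (n i)) := by
      rw [ZMod.card]
      exact (Nat.mem_divisors.mp ((Fintype.mem_piFinset.mp hd) i)).1
    have := IsAddCyclic.card_addOrderOf_eq_totient (α := ZMod (n i)) hdi
    simpa using this
  rw [hcardfiber]
  ring
end

section
/- For positive integers n₁,…,n_k and a divisor δ of lcm(n₁,…,n_k), the number of cyclic subgroups of order δ of ℤ_{n₁} × ⋯ × ℤ_{n_k} equals (1/φ(δ)) · Σ_{e ∣ δ} gcd(e,n₁)⋯gcd(e,n_k)·μ(δ/e). -/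
/-!
Every element of order δ generates exactly one cyclic subgroup of order δ, and each such subgroup
has exactly φ(δ) generators, so φ(δ) times the count equals the number of elements of order δ.
The solutions of e • g = 0 in ∏ ℤ_{nᵢ} number ∏ gcd(e, nᵢ), one cyclic factor at a time, and they
split by order over the divisors of e; Möbius inversion isolates the elements of order exactly δ.
-/

open Finset AddSubgroup ArithmeticFunction
open scoped ArithmeticFunction.Moebius

section CyclicSubgroups

variable {G : Type*} [AddGroup G]

theorem AddSubgroup.zmultiples_eq_iff_mem_of_addOrderOf_eq_card {H : AddSubgroup G} [Finite H]
    {g : G} (hg : addOrderOf g = Nat.card H) : zmultiples g = H ↔ g ∈ H := by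
  refine ⟨fun h => h ▸ mem_zmultiples g, fun h => eq_of_le_of_card_ge (zmultiples_le.mpr h) ?_⟩
  rw [Nat.card_zmultiples, hg]

theorem AddSubgroup.card_generators_eq_totient (H : AddSubgroup G) [IsAddCyclic H] [Finite H] :
    Nat.card {g : G // addOrderOf g = Nat.card H ∧ zmultiples g = H} = (Nat.card H).totient := by
  calc Nat.card {g : G // addOrderOf g = Nat.card H ∧ zmultiples g = H}
      = Nat.card {g : G // g ∈ H ∧ addOrderOf g = Nat.card H} :=
        Nat.card_congr <| Equiv.subtypeEquivRight fun g =>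
          ⟨fun ⟨hg, hH⟩ => ⟨(zmultiples_eq_iff_mem_of_addOrderOf_eq_card hg).mp hH, hg⟩,
            fun ⟨hH, hg⟩ => ⟨hg, (zmultiples_eq_iff_mem_of_addOrderOf_eq_card hg).mpr hH⟩⟩
    _ = Nat.card {h : H // addOrderOf h = Nat.card H} := by
        rw [← Nat.card_congr (Equiv.subtypeSubtypeEquivSubtypeInter (· ∈ H) _)]
        simp only [addOrderOf_coe]
    _ = (Nat.card H).totient := by
        have := Fintype.ofFinite H
        classical
        rw [Nat.card_eq_fintype_card, Fintype.card_subtype, Nat.card_eq_fintype_card]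
        exact IsAddCyclic.card_addOrderOf_eq_totient dvd_rfl

theorem card_addOrderOf_eq_card_zmultiples_mul_totient [Finite G] (δ : ℕ) :
    Nat.card {g : G // addOrderOf g = δ} =
      Nat.card {H : AddSubgroup G // (∃ g, H = zmultiples g) ∧ Nat.card H = δ} * δ.totient := by
  let T := {H : AddSubgroup G // (∃ g, H = zmultiples g) ∧ Nat.card H = δ}
  have := Fintype.ofFinite T
  let f : {g : G // addOrderOf g = δ} → T := fun g =>
    ⟨zmultiples g, ⟨g, rfl⟩, (Nat.card_zmultiples g.1).trans g.2⟩
  have card_fiber (H : T) : Nat.card {g // f g = H} = δ.totient := by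
    obtain ⟨H, ⟨g₀, rfl⟩, rfl⟩ := H
    rw [← card_generators_eq_totient, ← Nat.card_congr (Equiv.subtypeSubtypeEquivSubtypeInter _ _)]
    exact Nat.card_congr (Equiv.subtypeEquivRight fun _ => Subtype.ext_iff)
  calc Nat.card {g : G // addOrderOf g = δ}
      = ∑ H : T, Nat.card {g // f g = H} := by
        rw [Nat.card_congr (Equiv.sigmaFiberEquiv f).symm, Nat.card_sigma]
    _ = Nat.card T * δ.totient := by
        simp only [card_fiber, sum_const, card_univ, smul_eq_mul, Nat.card_eq_fintype_card]

theorem card_addOrderOf_eq_sum_card_nsmul_eq_zero_mul_moebius [Finite G] {δ : ℕ} (hδ : 0 < δ) :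
    (Nat.card {g : G // addOrderOf g = δ} : ℤ) =
      ∑ e ∈ δ.divisors, (Nat.card {g : G // e • g = 0} : ℤ) * μ (δ / e) := by
  have := Fintype.ofFinite G
  classical
  simp only [Nat.card_eq_fintype_card, Fintype.card_subtype]
  have inversion := (sum_eq_iff_sum_mul_moebius_eq (f := fun d => (#{g : G | addOrderOf g = d} : ℤ))
    (g := fun e => (#{g : G | e • g = 0} : ℤ))).mp (fun m hm => by
      exact_mod_cast sum_card_addOrderOf_eq_card_nsmul_eq_zero (G := G) hm.ne') δ hδ
  simp only [Int.cast_id] at inversion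
  rw [← inversion, Nat.sum_divisorsAntidiagonal' (fun a b => μ a * (#{g : G | b • g = 0} : ℤ))]
  simp only [mul_comm]

end CyclicSubgroups

theorem IsAddCyclic.card_nsmul_eq_zero (C : Type*) [AddCommGroup C] [IsAddCyclic C] [Finite C]
    (e : ℕ) : Nat.card {a : C // e • a = 0} = e.gcd (Nat.card C) :=
  (IsAddCyclic.card_nsmulAddMonoidHom_ker C e).trans (Nat.gcd_comm _ _)

theorem Pi.card_nsmul_eq_zero {ι : Type*} [Fintype ι] {A : ι → Type*} [∀ i, AddMonoid (A i)]
    (e : ℕ) : Nat.card {g : ∀ i, A i // e • g = 0} = ∏ i, Nat.card {a : A i // e • a = 0} := by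
  rw [← Nat.card_pi, ← Nat.card_congr Equiv.subtypePiEquivPi]
  simp only [funext_iff, Pi.smul_apply, Pi.zero_apply]

theorem cyclic_subgroup_count_of_order_general (k : ℕ) (n : Fin k → ℕ) (hn : ∀ i, 0 < n i)
    (δ : ℕ) :
    (Nat.card {H : AddSubgroup (∀ i, ZMod (n i)) //
        (∃ g, H = AddSubgroup.closure {g}) ∧ Nat.card H = δ} : ℚ) =
      (1 / (Nat.totient δ : ℚ)) *
        ∑ e ∈ δ.divisors, (∏ i, (Nat.gcd e (n i) : ℚ)) *
          (ArithmeticFunction.moebius (δ / e) : ℚ) := by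
  have (i : Fin k) : NeZero (n i) := ⟨(hn i).ne'⟩
  simp only [← zmultiples_eq_closure]
  rcases Nat.eq_zero_or_pos δ with rfl | hδ
  -- no subgroup has order 0, and the right side is 0 because 1 / φ 0 = 1 / 0 = 0 in ℚ
  · simp [Nat.card_pos.ne']
  have hmoebius := card_addOrderOf_eq_sum_card_nsmul_eq_zero_mul_moebius
    (G := ∀ i, ZMod (n i)) hδ
  rw [card_addOrderOf_eq_card_zmultiples_mul_totient] at hmoebius
  simp only [Pi.card_nsmul_eq_zero, IsAddCyclic.card_nsmul_eq_zero, Nat.card_zmod] at hmoebius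
  rw [one_div, inv_mul_eq_div, eq_div_iff (by positivity)]
  exact_mod_cast hmoebius

theorem cyclic_subgroup_count_of_order (k : ℕ) (n : Fin k → ℕ) (hn : ∀ i, 0 < n i)
    (δ : ℕ) (hδ : δ ∣ Finset.univ.lcm n) :
    (Nat.card {H : AddSubgroup (∀ i, ZMod (n i)) //
        (∃ g, H = AddSubgroup.closure {g}) ∧ Nat.card H = δ} : ℚ) =
      (1 / (Nat.totient δ : ℚ)) *
        ∑ e ∈ δ.divisors, (∏ i, (Nat.gcd e (n i) : ℚ)) *
          (ArithmeticFunction.moebius (δ / e) : ℚ) :=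
  cyclic_subgroup_count_of_order_general k n hn δ
end

section
/- For positive integers n₁,…,n_k and a divisor δ of lcm(n₁,…,n_k), the identity Σ_{e ∣ δ} gcd(e,n₁)⋯gcd(e,n_k)·μ(δ/e) = Σ φ(d₁)⋯φ(d_k) holds, where the right-hand sum is over tuples (d₁,…,d_k) with dᵢ ∣ nᵢ and lcm(d₁,…,d_k) = δ. -/
open Finset

lemma moebius_div_sum_filter (δ m : ℕ) (hδ0 : δ ≠ 0) :
    (∑ e ∈ δ.divisors.filter (fun e => m ∣ e), (ArithmeticFunction.moebius (δ / e) : ℤ)) =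
      if m = δ then 1 else 0 := by
  by_cases hm : m ∣ δ
  · have hm0 : m ≠ 0 := by rintro rfl; exact hδ0 (Nat.eq_zero_of_zero_dvd hm)
    have key : (∑ e ∈ δ.divisors.filter (fun e => m ∣ e),
        (ArithmeticFunction.moebius (δ / e) : ℤ)) =
        ∑ c ∈ (δ / m).divisors, (ArithmeticFunction.moebius c : ℤ) := by
      apply Finset.sum_nbij' (fun e => δ / e) (fun c => δ / c)
      · intro e he
        simp only [mem_filter, Nat.mem_divisors] at he
        obtain ⟨⟨hed, -⟩, hme⟩ := he
        rw [Nat.mem_divisors]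
        refine ⟨?_, ?_⟩
        · rw [Nat.dvd_div_iff_mul_dvd hm]
          calc m * (δ / e) ∣ e * (δ / e) := mul_dvd_mul_right hme _
            _ = δ := Nat.mul_div_cancel' hed
        · exact (Nat.div_pos (Nat.le_of_dvd (Nat.pos_of_ne_zero hδ0) hm)
            (Nat.pos_of_ne_zero hm0)).ne'
      · intro c hc
        rw [Nat.mem_divisors] at hc
        obtain ⟨hcd, -⟩ := hc
        have hcδ : c ∣ δ := hcd.trans (Nat.div_dvd_of_dvd hm)
        simp only [mem_filter, Nat.mem_divisors]
        refine ⟨⟨Nat.div_dvd_of_dvd hcδ, hδ0⟩, ?_⟩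
        rw [Nat.dvd_div_iff_mul_dvd hcδ, Nat.mul_comm, ← Nat.dvd_div_iff_mul_dvd hm]
        exact hcd
      · intro e he
        simp only [mem_filter, Nat.mem_divisors] at he
        exact Nat.div_div_self he.1.1 hδ0
      · intro c hc
        rw [Nat.mem_divisors] at hc
        exact Nat.div_div_self (hc.1.trans (Nat.div_dvd_of_dvd hm)) hδ0
      · intro e he; rfl
    rw [key]
    have h1 : ((ArithmeticFunction.moebius * ArithmeticFunction.zeta :
        ArithmeticFunction ℤ)) (δ / m) = ∑ c ∈ (δ / m).divisors, ArithmeticFunction.moebius c := by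
      rw [ArithmeticFunction.coe_mul_zeta_apply]
    rw [← h1, ArithmeticFunction.moebius_mul_coe_zeta, ArithmeticFunction.one_apply]
    have : δ / m = 1 ↔ m = δ := by
      constructor
      · intro h
        have := Nat.div_mul_cancel hm
        rw [h, Nat.one_mul] at this; omega
      · rintro rfl; exact Nat.div_self (Nat.pos_of_ne_zero hδ0)
    simp [this]
  · rw [if_neg (by rintro rfl; exact hm dvd_rfl)]
    apply Finset.sum_eq_zero
    intro e he
    simp only [mem_filter, Nat.mem_divisors] at he
    exact absurd (he.2.trans he.1.1) hm

theorem gcd_moebius_totient_identity (k : ℕ) (n : Fin k → ℕ) (hn : ∀ i, 0 < n i)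
    (δ : ℕ) (hδ : δ ∣ Finset.univ.lcm n) :
    (∑ e ∈ δ.divisors, (∏ i, (Nat.gcd e (n i) : ℤ)) * ArithmeticFunction.moebius (δ / e)) =
      ∑ d ∈ (Fintype.piFinset (fun i => (n i).divisors)).filter
          (fun d => Finset.univ.lcm d = δ),
        ∏ i, (Nat.totient (d i) : ℤ) := by
  classical
  have hL : Finset.univ.lcm n ≠ 0 := by
    simp only [Ne, Finset.lcm_eq_zero_iff, Set.mem_image]
    rintro ⟨i, -, h⟩
    exact (hn i).ne' h
  have hδ0 : δ ≠ 0 := by rintro rfl; exact hL (zero_dvd_iff.mp hδ)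
  -- rewrite the gcd product as a sum over divisor tuples
  have step1 : ∀ e ∈ δ.divisors, (∏ i, (Nat.gcd e (n i) : ℤ)) =
      ∑ d ∈ (Fintype.piFinset fun i => (n i).divisors),
        if (∀ i, d i ∣ e) then ∏ i, (Nat.totient (d i) : ℤ) else 0 := by
    intro e he
    rw [Nat.mem_divisors] at he
    have he0 : e ≠ 0 := by rintro rfl; exact hδ0 (Nat.eq_zero_of_zero_dvd he.1)
    have hgcd : ∀ i, (Nat.gcd e (n i) : ℤ) =
        ∑ d ∈ (n i).divisors.filter (· ∣ e), (Nat.totient d : ℤ) := by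
      intro i
      have hset : (Nat.gcd e (n i)).divisors = (n i).divisors.filter (· ∣ e) := by
        ext d
        simp only [Nat.mem_divisors, mem_filter, Nat.dvd_gcd_iff, Nat.gcd_eq_zero_iff]
        constructor
        · rintro ⟨⟨h1, h2⟩, -⟩; exact ⟨⟨h2, (hn i).ne'⟩, h1⟩
        · rintro ⟨⟨h1, -⟩, h2⟩; exact ⟨⟨h2, h1⟩, fun h => he0 (Nat.eq_zero_of_gcd_eq_zero_left h)⟩
      have := Nat.sum_totient (Nat.gcd e (n i))
      rw [hset] at this
      rw [← this]
      push_cast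
      rfl
    calc (∏ i, (Nat.gcd e (n i) : ℤ))
        = ∏ i, ∑ d ∈ (n i).divisors.filter (· ∣ e), (Nat.totient d : ℤ) := by
          exact Finset.prod_congr rfl fun i _ => hgcd i
      _ = ∑ d ∈ Fintype.piFinset (fun i => (n i).divisors.filter (· ∣ e)),
            ∏ i, (Nat.totient (d i) : ℤ) := Finset.prod_univ_sum _ _
      _ = _ := by
          have hpi : Fintype.piFinset (fun i => (n i).divisors.filter (· ∣ e)) =
              (Fintype.piFinset fun i => (n i).divisors).filter (fun d => ∀ i, d i ∣ e) := by
            ext d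
            simp [Fintype.mem_piFinset, Finset.mem_filter, forall_and]
          rw [hpi, Finset.sum_filter]
  rw [Finset.sum_congr rfl fun e he => by rw [step1 e he]]
  rw [Finset.sum_congr rfl fun e _ => Finset.sum_mul _ _ _]
  rw [Finset.sum_comm]
  have step2 : ∀ d ∈ (Fintype.piFinset fun i => (n i).divisors),
      (∑ e ∈ δ.divisors,
        (if (∀ i, d i ∣ e) then ∏ i, (Nat.totient (d i) : ℤ) else 0) *
          ArithmeticFunction.moebius (δ / e)) =
      (if Finset.univ.lcm d = δ then 1 else 0) * ∏ i, (Nat.totient (d i) : ℤ) := by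
    intro d _
    have hcond : ∀ e : ℕ, (∀ i, d i ∣ e) ↔ Finset.univ.lcm d ∣ e := by
      intro e
      rw [Finset.lcm_dvd_iff]
      simp
    calc (∑ e ∈ δ.divisors,
          (if (∀ i, d i ∣ e) then ∏ i, (Nat.totient (d i) : ℤ) else 0) *
            ArithmeticFunction.moebius (δ / e))
        = ∑ e ∈ δ.divisors.filter (fun e => Finset.univ.lcm d ∣ e),
            (∏ i, (Nat.totient (d i) : ℤ)) * ArithmeticFunction.moebius (δ / e) := by
          rw [Finset.sum_filter]
          refine Finset.sum_congr rfl fun e _ => ?_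
          by_cases h : Finset.univ.lcm d ∣ e
          · rw [if_pos h, if_pos ((hcond e).mpr h)]
          · rw [if_neg h, if_neg (fun hh => h ((hcond e).mp hh)), zero_mul]
      _ = (∏ i, (Nat.totient (d i) : ℤ)) *
            ∑ e ∈ δ.divisors.filter (fun e => Finset.univ.lcm d ∣ e),
              (ArithmeticFunction.moebius (δ / e) : ℤ) := by rw [Finset.mul_sum]
      _ = _ := by
          rw [moebius_div_sum_filter δ _ hδ0, mul_comm]
  rw [Finset.sum_congr rfl step2]
  rw [Finset.sum_filter] at *
  refine Finset.sum_congr rfl fun d _ => ?_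
  by_cases h : Finset.univ.lcm d = δ <;> simp [h]
end

section
/- For every prime p and integers 1 ≤ a ≤ b, the number of cyclic subgroups of ℤ_{p^a} × ℤ_{p^b} equals 2(1 + p + p² + ⋯ + p^{a-1}) + (b - a + 1)p^a. -/
open Finset AddSubgroup

lemma card_nsmul_ker (m n : ℕ) (hm : m ≠ 0) :
    Nat.card {x : ZMod m // n • x = 0} = m.gcd n := by
  haveI : NeZero m := ⟨hm⟩
  set f : ZMod m →+ ZMod m := AddMonoidHom.mk' (fun x => n • x) (fun x y => smul_add n x y)
    with hf
  have hker : Nat.card {x : ZMod m // n • x = 0} = Nat.card f.ker :=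
    Nat.card_congr (Equiv.subtypeEquivRight (fun x => by
      simp [hf, AddMonoidHom.mem_ker]))
  have hrange : f.range = zmultiples ((n : ZMod m)) := by
    ext x
    simp only [AddMonoidHom.mem_range, mem_zmultiples_iff]
    constructor
    · rintro ⟨y, rfl⟩
      refine ⟨(y.val : ℤ), ?_⟩
      simp [hf, nsmul_eq_mul, zsmul_eq_mul, ZMod.natCast_val, ZMod.cast_id]
      ring
    · rintro ⟨z, rfl⟩
      refine ⟨((z : ZMod m)), ?_⟩
      simp [hf, nsmul_eq_mul, zsmul_eq_mul]
      ring
  have h1 : Nat.card (ZMod m) = Nat.card (ZMod m ⧸ f.ker) * Nat.card f.ker :=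
    AddSubgroup.card_eq_card_quotient_mul_card_addSubgroup f.ker
  have h2 : Nat.card (ZMod m ⧸ f.ker) = m / m.gcd n := by
    rw [Nat.card_congr (QuotientAddGroup.quotientKerEquivRange f).toEquiv, hrange,
      Nat.card_zmultiples, ZMod.addOrderOf_coe n hm]
  rw [Nat.card_zmod, h2] at h1
  have hg : 0 < m.gcd n := Nat.gcd_pos_of_pos_left n (Nat.pos_of_ne_zero hm)
  have hd : 0 < m / m.gcd n :=
    Nat.div_pos (Nat.le_of_dvd (Nat.pos_of_ne_zero hm) (Nat.gcd_dvd_left m n)) hg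
  rw [hker]
  have : m / m.gcd n * m.gcd n = m := Nat.div_mul_cancel (Nat.gcd_dvd_left m n)
  exact (Nat.eq_of_mul_eq_mul_left hd (by omega)).symm
lemma card_torsion_prod {A B : Type*} [AddMonoid A] [AddMonoid B] (n : ℕ) :
    Nat.card {g : A × B // n • g = 0} =
      Nat.card {x : A // n • x = 0} * Nat.card {y : B // n • y = 0} := by
  rw [← Nat.card_prod]
  exact Nat.card_congr ((Equiv.subtypeEquivRight fun g => by
    simp [Prod.ext_iff]).trans (Equiv.subtypeProdEquivProd))


lemma card_generators {G : Type*} [AddCommGroup G] [Finite G] (H : AddSubgroup G)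
    (g0 : G) (hg0 : AddSubgroup.zmultiples g0 = H) :
    Nat.card {g : G // AddSubgroup.zmultiples g = H} = Nat.totient (addOrderOf g0) := by
  classical
  cases nonempty_fintype G
  set n := addOrderOf g0 with hn
  have hH : Nat.card H = n := by rw [← hg0, Nat.card_zmultiples]
  haveI : IsAddCyclic H := by
    refine ⟨⟨g0, hg0 ▸ AddSubgroup.mem_zmultiples g0⟩, fun x => ?_⟩
    have hx : (x : G) ∈ zmultiples g0 := by rw [hg0]; exact x.2
    obtain ⟨z, hz⟩ := AddSubgroup.mem_zmultiples_iff.mp hx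
    exact AddSubgroup.mem_zmultiples_iff.mpr ⟨z, Subtype.ext (by simpa using hz)⟩
  have key : ∀ g : G, zmultiples g = H ↔ g ∈ H ∧ addOrderOf g = n := by
    intro g
    constructor
    · intro h
      exact ⟨h ▸ mem_zmultiples g, by rw [← Nat.card_zmultiples, h, hH]⟩
    · rintro ⟨hmem, hord⟩
      refine AddSubgroup.eq_of_le_of_card_ge (AddSubgroup.zmultiples_le.mpr hmem) ?_
      rw [hH, Nat.card_zmultiples, hord]
  have e : {g : G // AddSubgroup.zmultiples g = H} ≃ {h : H // addOrderOf h = n} :=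
    (Equiv.subtypeEquivRight key).trans <|
      (Equiv.subtypeSubtypeEquivSubtypeInter (· ∈ H) (fun g => addOrderOf g = n)).symm.trans
        (Equiv.subtypeEquivRight fun h => by rw [AddSubgroup.addOrderOf_coe])
  rw [Nat.card_congr e]
  letI : Fintype H := Fintype.ofFinite H
  rw [Nat.card_eq_fintype_card, Fintype.card_subtype]
  have hdvd : n ∣ Fintype.card H := by rw [← Nat.card_eq_fintype_card, hH]
  exact IsAddCyclic.card_addOrderOf_eq_totient hdvd

lemma card_cyclic_filter_mul_totient {G : Type*} [AddCommGroup G] [Fintype G]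
    [DecidableEq G] [DecidableEq (AddSubgroup G)] (d : ℕ) :
    ((Finset.univ.image fun g : G => zmultiples g).filter
        fun H : AddSubgroup G => Nat.card ↥H = d).card * Nat.totient d
      = (Finset.univ.filter fun g : G => addOrderOf g = d).card := by
  classical
  set T : Finset G := Finset.univ.filter fun g : G => addOrderOf g = d with hT
  have himg : ((Finset.univ.image fun g : G => zmultiples g).filter
      fun H : AddSubgroup G => Nat.card ↥H = d) = T.image fun g : G => zmultiples g := by
    ext H
    simp only [Finset.mem_filter, Finset.mem_image, Finset.mem_univ, true_and, hT]
    constructor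
    · rintro ⟨⟨g, rfl⟩, hd⟩
      rw [Nat.card_zmultiples] at hd
      exact ⟨g, hd, rfl⟩
    · rintro ⟨g, hg, rfl⟩
      exact ⟨⟨g, rfl⟩, by rw [Nat.card_zmultiples]; exact hg⟩
  rw [himg]
  have hfib : T.card = ∑ H ∈ T.image (fun g : G => zmultiples g),
      (T.filter fun g => zmultiples g = H).card :=
    Finset.card_eq_sum_card_fiberwise fun x hx => Finset.mem_image_of_mem _ hx
  have hconst : ∀ H ∈ T.image (fun g : G => zmultiples g),
      (T.filter fun g => zmultiples g = H).card = Nat.totient d := by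
    intro H hH
    obtain ⟨g0, hg0T, hfg0⟩ := Finset.mem_image.mp hH
    have hg0d : addOrderOf g0 = d := by simpa [hT] using hg0T
    have hTfil : (T.filter fun g => zmultiples g = H)
        = Finset.univ.filter fun g => zmultiples g = H := by
      ext g
      simp only [hT, Finset.mem_filter, Finset.mem_univ, true_and, Finset.filter_filter]
      constructor
      · rintro ⟨-, h⟩; exact h
      · intro h
        refine ⟨?_, h⟩
        have hzz : zmultiples g = zmultiples g0 := h.trans hfg0.symm
        calc addOrderOf g = Nat.card (zmultiples g) := (Nat.card_zmultiples g).symm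
          _ = Nat.card (zmultiples g0) := by rw [hzz]
          _ = d := by rw [Nat.card_zmultiples, hg0d]
    rw [hTfil, ← Fintype.card_subtype, ← Nat.card_eq_fintype_card, ← hg0d]
    exact card_generators H g0 hfg0
  rw [Finset.sum_congr rfl hconst, Finset.sum_const, smul_eq_mul] at hfib
  omega
lemma geom_sum_aux (p a : ℕ) : p * (∑ i ∈ Finset.range a, p ^ i) + 1
    = (∑ i ∈ Finset.range a, p ^ i) + p ^ a := by
  induction a with
  | zero => simp
  | succ n ih =>
    rw [Finset.sum_range_succ, mul_add, pow_succ, mul_comm p (p ^ n)]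
    omega

theorem cyclic_subgroup_count_prime_powers (p : ℕ) (hp : p.Prime) (a b : ℕ)
    (ha : 1 ≤ a) (hab : a ≤ b) :
    Nat.card {H : AddSubgroup (ZMod (p ^ a) × ZMod (p ^ b)) //
        ∃ g, H = AddSubgroup.closure {g}} =
      2 * (∑ i ∈ Finset.range a, p ^ i) + (b - a + 1) * p ^ a := by
  classical
  have hp1 : 1 < p := hp.one_lt
  have hp0 : p ≠ 0 := hp.pos.ne'
  have hpa : p ^ a ≠ 0 := pow_ne_zero a hp0
  have hpb : p ^ b ≠ 0 := pow_ne_zero b hp0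
  haveI : NeZero (p ^ a) := ⟨hpa⟩
  haveI : NeZero (p ^ b) := ⟨hpb⟩
  -- torsion counts
  have hU : ∀ j : ℕ,
      (Finset.univ.filter fun g : ZMod (p ^ a) × ZMod (p ^ b) => (p ^ j) • g = 0).card
      = (p ^ a).gcd (p ^ j) * (p ^ b).gcd (p ^ j) := by
    intro j
    rw [← Fintype.card_subtype, ← Nat.card_eq_fintype_card, card_torsion_prod,
      card_nsmul_ker _ _ hpa, card_nsmul_ker _ _ hpb]
  -- every element is killed by p ^ b
  have hkill : ∀ g : ZMod (p ^ a) × ZMod (p ^ b), (p ^ b) • g = 0 := by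
    intro g
    have h1 : (p ^ b) • g.1 = 0 := by
      rw [nsmul_eq_mul,
        (ZMod.natCast_eq_zero_iff (p ^ b) (p ^ a)).mpr (pow_dvd_pow p hab), zero_mul]
    have h2 : (p ^ b) • g.2 = 0 := by
      rw [nsmul_eq_mul,
        (ZMod.natCast_eq_zero_iff (p ^ b) (p ^ b)).mpr dvd_rfl, zero_mul]
    exact Prod.ext h1 h2
  -- step 1 : the count is the card of the image finset
  set 𝒞 : Finset (AddSubgroup (ZMod (p ^ a) × ZMod (p ^ b))) :=
    Finset.univ.image (fun g : ZMod (p ^ a) × ZMod (p ^ b) => zmultiples g) with hC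
  have step1 : Nat.card {H : AddSubgroup (ZMod (p ^ a) × ZMod (p ^ b)) //
      ∃ g, H = AddSubgroup.closure {g}} = 𝒞.card := by
    rw [← Nat.card_eq_finsetCard]
    apply Nat.card_congr
    apply Equiv.subtypeEquivRight
    intro H
    simp only [hC, Finset.mem_image, Finset.mem_univ, true_and]
    constructor
    · rintro ⟨g, rfl⟩
      exact ⟨g, zmultiples_eq_closure g⟩
    · rintro ⟨g, rfl⟩
      exact ⟨g, zmultiples_eq_closure g⟩
  -- step 2 : fiber the image by cardinality
  set c : ℕ → ℕ := fun k => ((𝒞.filter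
    fun H : AddSubgroup (ZMod (p ^ a) × ZMod (p ^ b)) => Nat.card ↥H = p ^ k).card) with hcdef
  have step2 : 𝒞.card = ∑ k ∈ Finset.range (b + 1), c k := by
    have hmem : ∀ H ∈ 𝒞, Nat.card ↥H ∈ (Finset.range (b + 1)).image (p ^ ·) := by
      intro H hH
      obtain ⟨g, -, rfl⟩ := Finset.mem_image.mp hH
      have hdvd : addOrderOf g ∣ p ^ b := addOrderOf_dvd_iff_nsmul_eq_zero.mpr (hkill g)
      obtain ⟨k, hk, he⟩ := (Nat.dvd_prime_pow hp).mp hdvd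
      exact Finset.mem_image.mpr ⟨k, Finset.mem_range.mpr (by omega),
        by rw [Nat.card_zmultiples, he]⟩
    rw [Finset.card_eq_sum_card_fiberwise hmem, Finset.sum_image
      (fun i _ j _ h => Nat.pow_right_injective hp.two_le h)]
  -- the key relation per k
  have hc : ∀ k : ℕ, c k * Nat.totient (p ^ k)
      = (Finset.univ.filter
          fun g : ZMod (p ^ a) × ZMod (p ^ b) => addOrderOf g = p ^ k).card :=
    fun k => card_cyclic_filter_mul_totient (p ^ k)
  -- count of elements of order exactly p^(j+1)
  have hT : ∀ j : ℕ, (Finset.univ.filter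
      fun g : ZMod (p ^ a) × ZMod (p ^ b) => addOrderOf g = p ^ (j + 1)).card
      = (p ^ a).gcd (p ^ (j + 1)) * (p ^ b).gcd (p ^ (j + 1))
        - (p ^ a).gcd (p ^ j) * (p ^ b).gcd (p ^ j) := by
    intro j
    have hset : (Finset.univ.filter
        fun g : ZMod (p ^ a) × ZMod (p ^ b) => addOrderOf g = p ^ (j + 1))
        = (Finset.univ.filter fun g : ZMod (p ^ a) × ZMod (p ^ b) => (p ^ (j + 1)) • g = 0)
          \ (Finset.univ.filter fun g : ZMod (p ^ a) × ZMod (p ^ b) => (p ^ j) • g = 0) := by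
      ext g
      simp only [Finset.mem_filter, Finset.mem_sdiff, Finset.mem_univ, true_and]
      constructor
      · intro h
        have h1 : addOrderOf g ∣ p ^ (j + 1) := h ▸ dvd_rfl
        refine ⟨addOrderOf_dvd_iff_nsmul_eq_zero.mp h1, fun h0 => ?_⟩
        have h2 : addOrderOf g ∣ p ^ j := addOrderOf_dvd_iff_nsmul_eq_zero.mpr h0
        rw [h] at h2
        exact absurd ((Nat.pow_dvd_pow_iff_le_right hp1).mp h2) (by omega)
      · rintro ⟨h1, h0⟩
        have hdvd : addOrderOf g ∣ p ^ (j + 1) := addOrderOf_dvd_iff_nsmul_eq_zero.mpr h1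
        obtain ⟨i, hi, he⟩ := (Nat.dvd_prime_pow hp).mp hdvd
        have hij : i = j + 1 := by
          by_contra hne
          have hle : i ≤ j := by omega
          exact h0 (addOrderOf_dvd_iff_nsmul_eq_zero.mp (he ▸ pow_dvd_pow p hle))
        rw [he, hij]
    have hsub : (Finset.univ.filter
        fun g : ZMod (p ^ a) × ZMod (p ^ b) => (p ^ j) • g = 0)
        ⊆ (Finset.univ.filter
          fun g : ZMod (p ^ a) × ZMod (p ^ b) => (p ^ (j + 1)) • g = 0) := by
      intro g hg
      simp only [Finset.mem_filter, Finset.mem_univ, true_and] at hg ⊢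
      rw [pow_succ, mul_nsmul, hg, nsmul_zero]
    rw [hset, Finset.card_sdiff_of_subset hsub, hU, hU]
  -- value of c 0
  have hc0 : c 0 = 1 := by
    have h0 := hc 0
    rw [pow_zero, Nat.totient_one, mul_one] at h0
    rw [h0]
    have : (Finset.univ.filter
        fun g : ZMod (p ^ a) × ZMod (p ^ b) => addOrderOf g = 1)
        = Finset.univ.filter fun g : ZMod (p ^ a) × ZMod (p ^ b) => g = 0 := by
      ext g
      simp [AddMonoid.addOrderOf_eq_one_iff]
    rw [this, Finset.filter_eq', if_pos (Finset.mem_univ _), Finset.card_singleton]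
  -- helper for the nonlinear arithmetic: p = q + 2
  obtain ⟨q, hq⟩ : ∃ q, p = q + 2 := ⟨p - 2, by omega⟩
  -- value of c (k+1) for k + 1 ≤ a
  have hca : ∀ k ∈ Finset.range a, c (k + 1) = (p + 1) * p ^ k := by
    intro k hk
    have hk' : k + 1 ≤ a := Finset.mem_range.mp hk
    symm
    apply Nat.eq_of_mul_eq_mul_right (Nat.totient_pos.mpr (pow_pos hp.pos (k + 1)))
    rw [hc (k + 1), hT k,
      Nat.gcd_eq_right (pow_dvd_pow p hk'),
      Nat.gcd_eq_right (pow_dvd_pow p (hk'.trans hab)),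
      Nat.gcd_eq_right (pow_dvd_pow p (by omega : k ≤ a)),
      Nat.gcd_eq_right (pow_dvd_pow p (by omega : k ≤ b)),
      Nat.totient_prime_pow hp (Nat.succ_pos k), Nat.succ_sub_one]
    symm
    apply Nat.sub_eq_of_eq_add
    subst hq
    rw [show q + 2 - 1 = q + 1 from rfl, pow_succ]
    ring
  -- value of c (k+1) for a ≤ k < b
  have hcb : ∀ k ∈ Finset.Ico a b, c (k + 1) = p ^ a := by
    intro k hk
    obtain ⟨hak, hkb⟩ := Finset.mem_Ico.mp hk
    symm
    apply Nat.eq_of_mul_eq_mul_right (Nat.totient_pos.mpr (pow_pos hp.pos (k + 1)))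
    rw [hc (k + 1), hT k,
      Nat.gcd_eq_left (pow_dvd_pow p (by omega : a ≤ k + 1)),
      Nat.gcd_eq_right (pow_dvd_pow p (by omega : k + 1 ≤ b)),
      Nat.gcd_eq_left (pow_dvd_pow p hak),
      Nat.gcd_eq_right (pow_dvd_pow p (by omega : k ≤ b)),
      Nat.totient_prime_pow hp (Nat.succ_pos k), Nat.succ_sub_one]
    symm
    apply Nat.sub_eq_of_eq_add
    subst hq
    rw [show q + 2 - 1 = q + 1 from rfl, pow_succ]
    ring
  -- assemble the sum
  rw [step1, step2, Finset.sum_range_succ' c b, hc0]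
  rw [Finset.range_eq_Ico, ← Finset.sum_Ico_consecutive (fun k => c (k + 1))
    (Nat.zero_le a) hab, ← Finset.range_eq_Ico]
  rw [Finset.sum_congr rfl hca, Finset.sum_congr rfl hcb, Finset.sum_const,
    Nat.card_Ico, smul_eq_mul, ← Finset.mul_sum]
  -- final arithmetic
  have hgeom := geom_sum_aux p a
  have h1 : (p + 1) * (∑ i ∈ Finset.range a, p ^ i)
      = p * (∑ i ∈ Finset.range a, p ^ i) + (∑ i ∈ Finset.range a, p ^ i) := by ring
  have h2 : (b - a + 1) * p ^ a = (b - a) * p ^ a + p ^ a := by ring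
  rw [h1, h2]
  omega
end

section
/- For all positive integers m and n, the number of cyclic subgroups of ℤ_m × ℤ_n equals Σ_{d₁ ∣ m} Σ_{d₂ ∣ n} φ(gcd(d₁, d₂)). -/
open Finset AddSubgroup

private lemma tot_lcm_gcd {a b : ℕ} (ha : 0 < a) :
    Nat.totient (Nat.gcd a b) * Nat.totient (Nat.lcm a b) = Nat.totient a * Nat.totient b := by
  have hg : 0 < Nat.gcd a b := Nat.gcd_pos_of_pos_left _ ha
  have hgl : Nat.gcd (Nat.gcd a b) (Nat.lcm a b) = Nat.gcd a b :=
    Nat.gcd_eq_left ((Nat.gcd_dvd_left a b).trans (Nat.dvd_lcm_left a b))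
  have h2 := Nat.totient_gcd_mul_totient_mul (Nat.gcd a b) (Nat.lcm a b)
  rw [hgl, Nat.gcd_mul_lcm] at h2
  have h1 := Nat.totient_gcd_mul_totient_mul a b
  exact Nat.eq_of_mul_eq_mul_right hg (h2.symm.trans h1)

private lemma card_closure_singleton {G : Type*} [AddGroup G] (x : G) :
    Nat.card (closure {x} : AddSubgroup G) = addOrderOf x := by
  rw [← zmultiples_eq_closure, Nat.card_zmultiples]

private lemma card_map_fst_closure {A B : Type*} [AddGroup A] [AddGroup B] (x : A × B) :
    Nat.card ((closure {x} : AddSubgroup (A × B)).map (AddMonoidHom.fst A B)) = addOrderOf x.1 := by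
  rw [AddMonoidHom.map_closure, Set.image_singleton, card_closure_singleton]
  rfl

private lemma card_map_snd_closure {A B : Type*} [AddGroup A] [AddGroup B] (x : A × B) :
    Nat.card ((closure {x} : AddSubgroup (A × B)).map (AddMonoidHom.snd A B)) = addOrderOf x.2 := by
  rw [AddMonoidHom.map_closure, Set.image_singleton, card_closure_singleton]
  rfl

private lemma isAddCyclic_closure_singleton {G : Type*} [AddGroup G] (x : G) :
    IsAddCyclic (closure ({x} : Set G)) := by
  refine ⟨⟨⟨x, mem_closure_singleton_self x⟩, fun a => ?_⟩⟩
  obtain ⟨y, hy⟩ := a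
  obtain ⟨k, hk⟩ := (AddSubgroup.mem_closure_singleton).mp hy
  exact ⟨k, Subtype.ext (by simpa using hk)⟩

private lemma closure_singleton_eq_iff {G : Type*} [AddGroup G] [Finite G] (x x₀ : G) :
    closure ({x} : Set G) = closure ({x₀} : Set G) ↔
      x ∈ closure ({x₀} : Set G) ∧ addOrderOf x = addOrderOf x₀ := by
  constructor
  · intro h
    refine ⟨h ▸ mem_closure_singleton_self x, ?_⟩
    rw [← card_closure_singleton x, h, card_closure_singleton]
  · rintro ⟨hmem, hord⟩
    refine AddSubgroup.eq_of_le_of_card_ge ?_ ?_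
    · rw [closure_le, Set.singleton_subset_iff]; exact hmem
    · rw [card_closure_singleton, card_closure_singleton, hord]

private lemma card_generators_s4 {G : Type*} [AddGroup G] [Fintype G] [DecidableEq (AddSubgroup G)]
    (x₀ : G) :
    (univ.filter fun x : G => closure ({x} : Set G) = closure ({x₀} : Set G)).card
      = Nat.totient (addOrderOf x₀) := by
  classical
  haveI : IsAddCyclic (closure ({x₀} : Set G)) := isAddCyclic_closure_singleton x₀
  have hcard : Fintype.card (closure ({x₀} : Set G)) = addOrderOf x₀ := by
    rw [← Nat.card_eq_fintype_card, card_closure_singleton]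
  have := IsAddCyclic.card_addOrderOf_eq_totient (α := closure ({x₀} : Set G))
    (d := addOrderOf x₀) (by rw [hcard])
  rw [← this]
  refine Finset.card_bij (fun x hx => (⟨x, ((closure_singleton_eq_iff x x₀).mp
      (mem_filter.mp hx).2).1⟩ : closure ({x₀} : Set G))) ?_ ?_ ?_
  · intro x hx
    have h := (closure_singleton_eq_iff x x₀).mp (mem_filter.mp hx).2
    simp only [mem_filter, mem_univ, true_and]
    rw [AddSubgroup.addOrderOf_mk]
    exact h.2
  · intro x hx y hy h
    exact congrArg Subtype.val h
  · intro b hb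
    have hb' : addOrderOf (b : G) = addOrderOf x₀ := by
      rw [AddSubgroup.addOrderOf_coe]
      exact (mem_filter.mp hb).2
    refine ⟨(b : G), ?_, rfl⟩
    simp only [mem_filter, mem_univ, true_and]
    exact (closure_singleton_eq_iff _ x₀).mpr ⟨b.2, hb'⟩

theorem cyclic_subgroup_count_two (m n : ℕ) (hm : 0 < m) (hn : 0 < n) :
    Nat.card {H : AddSubgroup (ZMod m × ZMod n) // ∃ g, H = AddSubgroup.closure {g}} =
      ∑ d₁ ∈ m.divisors, ∑ d₂ ∈ n.divisors, Nat.totient (Nat.gcd d₁ d₂) := by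
  classical
  haveI : NeZero m := ⟨hm.ne'⟩
  haveI : NeZero n := ⟨hn.ne'⟩
  set f : ZMod m × ZMod n → AddSubgroup (ZMod m × ZMod n) := fun g => closure {g} with hf
  -- key invariant
  have key : ∀ x y : ZMod m × ZMod n, f x = f y →
      addOrderOf x.1 = addOrderOf y.1 ∧ addOrderOf x.2 = addOrderOf y.2 := by
    intro x y hxy
    constructor
    · have h1 : Nat.card ((f x).map (AddMonoidHom.fst (ZMod m) (ZMod n))) = addOrderOf x.1 :=
        card_map_fst_closure x
      have h2 : Nat.card ((f y).map (AddMonoidHom.fst (ZMod m) (ZMod n))) = addOrderOf y.1 :=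
        card_map_fst_closure y
      rw [hxy] at h1
      exact h1.symm.trans h2
    · have h1 : Nat.card ((f x).map (AddMonoidHom.snd (ZMod m) (ZMod n))) = addOrderOf x.2 :=
        card_map_snd_closure x
      have h2 : Nat.card ((f y).map (AddMonoidHom.snd (ZMod m) (ZMod n))) = addOrderOf y.2 :=
        card_map_snd_closure y
      rw [hxy] at h1
      exact h1.symm.trans h2
  -- step 0 : Nat.card to Finset.card
  have h0 : Nat.card {H : AddSubgroup (ZMod m × ZMod n) // ∃ g, H = AddSubgroup.closure {g}}
      = (univ.image f).card := by
    have e : {H : AddSubgroup (ZMod m × ZMod n) // ∃ g, H = AddSubgroup.closure {g}}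
        ≃ (Set.range f) :=
      Equiv.subtypeEquivRight fun H => by
        simp only [hf, Set.mem_range, eq_comm]
    rw [Nat.card_congr e, Nat.card_coe_set_eq]
    have : Set.range f = ↑(univ.image f) := by
      rw [coe_image, coe_univ, Set.image_univ]
    rw [this, Set.ncard_coe_finset]
  rw [h0]
  set A : ℕ × ℕ → Finset (ZMod m × ZMod n) := fun p =>
    univ.filter (fun x : ZMod m × ZMod n => addOrderOf x.1 = p.1 ∧ addOrderOf x.2 = p.2) with hA
  have himg : univ.image f = (m.divisors ×ˢ n.divisors).biUnion (fun p => (A p).image f) := by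
    ext H
    simp only [mem_image, mem_biUnion, hA, mem_filter, mem_univ, true_and, mem_product]
    constructor
    · rintro ⟨x, -, rfl⟩
      refine ⟨(addOrderOf x.1, addOrderOf x.2), ⟨?_, ?_⟩, x, ⟨rfl, rfl⟩, rfl⟩
      · refine Nat.mem_divisors.mpr ⟨?_, hm.ne'⟩
        have h := addOrderOf_dvd_card (x := x.1)
        rwa [ZMod.card] at h
      · refine Nat.mem_divisors.mpr ⟨?_, hn.ne'⟩
        have h := addOrderOf_dvd_card (x := x.2)
        rwa [ZMod.card] at h
    · rintro ⟨p, -, x, -, rfl⟩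
      exact ⟨x, rfl⟩
  rw [himg, Finset.card_biUnion, Finset.sum_product]
  · -- main per-pair computation
    refine Finset.sum_congr rfl fun d₁ hd₁ => Finset.sum_congr rfl fun d₂ hd₂ => ?_
    obtain ⟨hd₁dvd, -⟩ := Nat.mem_divisors.mp hd₁
    obtain ⟨hd₂dvd, -⟩ := Nat.mem_divisors.mp hd₂
    have hd₁pos : 0 < d₁ := Nat.pos_of_dvd_of_pos hd₁dvd hm
    have hd₂pos : 0 < d₂ := Nat.pos_of_dvd_of_pos hd₂dvd hn
    have hLpos : 0 < Nat.lcm d₁ d₂ := Nat.lcm_pos hd₁pos hd₂pos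
    -- card of A
    have cardA : (A (d₁, d₂)).card = Nat.totient d₁ * Nat.totient d₂ := by
      have hsp : A (d₁, d₂) = (univ.filter fun a : ZMod m => addOrderOf a = d₁) ×ˢ
          (univ.filter fun b : ZMod n => addOrderOf b = d₂) := by
        ext x
        simp [hA, Finset.mem_product]
      rw [hsp, Finset.card_product]
      have e1 := IsAddCyclic.card_addOrderOf_eq_totient (α := ZMod m) (d := d₁)
        (by rw [ZMod.card]; exact hd₁dvd)
      have e2 := IsAddCyclic.card_addOrderOf_eq_totient (α := ZMod n) (d := d₂)
        (by rw [ZMod.card]; exact hd₂dvd)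
      rw [← e1, ← e2]
    -- fibers
    have fib : ∀ H ∈ (A (d₁, d₂)).image f,
        ((A (d₁, d₂)).filter fun x => f x = H).card = Nat.totient (Nat.lcm d₁ d₂) := by
      intro H hH
      obtain ⟨x₀, hx₀A, rfl⟩ := mem_image.mp hH
      have hx₀ : addOrderOf x₀.1 = d₁ ∧ addOrderOf x₀.2 = d₂ := by
        simpa [hA] using hx₀A
      have hfull : ((A (d₁, d₂)).filter fun x => f x = f x₀)
          = univ.filter fun x : ZMod m × ZMod n =>
              AddSubgroup.closure ({x} : Set (ZMod m × ZMod n))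
                = AddSubgroup.closure ({x₀} : Set (ZMod m × ZMod n)) := by
        ext x
        simp only [mem_filter, hA, mem_univ, true_and]
        constructor
        · rintro ⟨-, h⟩; exact h
        · intro h
          have hk := key x x₀ h
          exact ⟨⟨hk.1.trans hx₀.1, hk.2.trans hx₀.2⟩, h⟩
      rw [hfull]
      have hgen := card_generators_s4 x₀
      rw [Prod.addOrderOf, hx₀.1, hx₀.2] at hgen
      exact hgen
    have total : (A (d₁, d₂)).card
        = ((A (d₁, d₂)).image f).card * Nat.totient (Nat.lcm d₁ d₂) := by
      rw [Finset.card_eq_sum_card_fiberwise (fun x hx => mem_image_of_mem f hx),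
        Finset.sum_congr rfl fib, Finset.sum_const, smul_eq_mul]
    have htot := tot_lcm_gcd (b := d₂) hd₁pos
    have heq : ((A (d₁, d₂)).image f).card * Nat.totient (Nat.lcm d₁ d₂)
        = Nat.totient (Nat.gcd d₁ d₂) * Nat.totient (Nat.lcm d₁ d₂) := by
      rw [← total, cardA, htot]
    exact Nat.eq_of_mul_eq_mul_right (Nat.totient_pos.mpr hLpos) heq
  · -- disjointness
    intro p hp q hq hpq
    simp only [Finset.disjoint_left]
    intro H hHp hHq
    obtain ⟨x, hxA, rfl⟩ := mem_image.mp hHp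
    obtain ⟨y, hyA, hfy⟩ := mem_image.mp hHq
    have hx : addOrderOf x.1 = p.1 ∧ addOrderOf x.2 = p.2 := by simpa [hA] using hxA
    have hy : addOrderOf y.1 = q.1 ∧ addOrderOf y.2 = q.2 := by simpa [hA] using hyA
    have hk := key y x hfy
    exact hpq (Prod.ext (hx.1 ▸ hk.1 ▸ hy.1.symm) (hx.2 ▸ hk.2 ▸ hy.2.symm)).symm
end

section
/- For all positive integers m and n, the number of cyclic subgroups of ℤ_m × ℤ_n equals Σ_{d ∣ gcd(m,n)} (μ*φ)(d)·τ(m/d)·τ(n/d), where μ*φ is the Dirichlet convolution of the Möbius function with Euler's function and τ is the number-of-divisors function. -/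
open Finset AddSubgroup

section Aux

variable {G : Type*} [AddGroup G]

instance isAddCyclic_zmultiples_s5 (g : G) : IsAddCyclic (zmultiples g) := by
  refine ⟨⟨g, mem_zmultiples g⟩, ?_⟩
  rintro ⟨x, hx⟩
  obtain ⟨k, rfl⟩ := mem_zmultiples_iff.mp hx
  exact ⟨k, Subtype.ext (by simp)⟩

lemma fiber_card [Fintype G] [DecidableEq (AddSubgroup G)] (g₀ : G) :
    (Finset.univ.filter fun g : G => zmultiples g = zmultiples g₀).card
      = Nat.totient (Nat.card (zmultiples g₀)) := by
  classical
  haveI : Fintype (zmultiples g₀) := Fintype.ofFinite _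
  rw [Nat.card_eq_fintype_card]
  rw [← IsAddCyclic.card_addOrderOf_eq_totient
    (α := ↥(zmultiples g₀)) (d := Fintype.card ↥(zmultiples g₀)) dvd_rfl]
  refine Finset.card_bij' (fun g hg => ⟨g, ?_⟩) (fun h _ => (h : G)) ?_ ?_ ?_ ?_
  · have := (Finset.mem_filter.mp hg).2
    exact this ▸ mem_zmultiples g
  · intro g hg
    have hg' := (Finset.mem_filter.mp hg).2
    simp only [Finset.mem_filter, Finset.mem_univ, true_and]
    rw [AddSubgroup.addOrderOf_mk, ← Nat.card_zmultiples g, hg',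
      Nat.card_eq_fintype_card]
  · intro h hh
    have hh' := (Finset.mem_filter.mp hh).2
    simp only [Finset.mem_filter, Finset.mem_univ, true_and]
    have hcard : Nat.card (zmultiples (h : G)) = Nat.card (zmultiples g₀) := by
      rw [Nat.card_zmultiples, AddSubgroup.addOrderOf_coe, hh', Nat.card_eq_fintype_card]
    exact AddSubgroup.eq_of_le_of_card_ge (zmultiples_le_of_mem h.2) hcard.ge
  · intro g hg; rfl
  · intro h hh; rfl

lemma countA [Fintype G] [DecidableEq (AddSubgroup G)] :
    ((Finset.univ.image fun g : G => zmultiples g).card : ℚ)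
      = ∑ g : G, (1 : ℚ) / (Nat.totient (addOrderOf g)) := by
  classical
  rw [← Finset.sum_fiberwise_of_maps_to (g := fun g : G => zmultiples g)
    (fun g _ => Finset.mem_image_of_mem _ (Finset.mem_univ g))
    (fun g => (1 : ℚ) / (Nat.totient (addOrderOf g)))]
  rw [Finset.card_eq_sum_ones, Nat.cast_sum]
  refine Finset.sum_congr rfl fun H hH => ?_
  obtain ⟨g₀, -, rfl⟩ := Finset.mem_image.mp hH
  have horder : ∀ g ∈ Finset.univ.filter (fun g : G => zmultiples g = zmultiples g₀),
      addOrderOf g = Nat.card (zmultiples g₀) := by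
    intro g hg
    rw [← Nat.card_zmultiples g, (Finset.mem_filter.mp hg).2]
  rw [Finset.sum_congr rfl (fun g hg => by rw [horder g hg]), Finset.sum_const,
    fiber_card g₀, nsmul_eq_mul, mul_one_div]
  have hpos : 0 < Nat.totient (Nat.card (zmultiples g₀)) :=
    Nat.totient_pos.mpr Nat.card_pos
  rw [Nat.cast_one, div_self (by exact_mod_cast hpos.ne')]

end Aux

lemma sum_orderOf_zmod (k : ℕ) [NeZero k] (hk : 0 < k) (F : ℕ → ℚ) :
    ∑ x : ZMod k, F (addOrderOf x) = ∑ a ∈ k.divisors, (Nat.totient a : ℚ) * F a := by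
  classical
  rw [← Finset.sum_fiberwise_of_maps_to (g := fun x : ZMod k => addOrderOf x)
    (t := k.divisors) (fun x _ => Nat.mem_divisors.mpr
      ⟨by have h := addOrderOf_dvd_card (x := x); rwa [ZMod.card] at h, hk.ne'⟩)
    (fun x => F (addOrderOf x))]
  refine Finset.sum_congr rfl fun a ha => ?_
  rw [Finset.sum_congr rfl (fun x hx => by rw [(Finset.mem_filter.mp hx).2]),
    Finset.sum_const, nsmul_eq_mul]
  congr 1
  have hd : a ∣ Fintype.card (ZMod k) := by
    rw [ZMod.card]; exact (Nat.mem_divisors.mp ha).1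
  exact_mod_cast congrArg Nat.cast (IsAddCyclic.card_addOrderOf_eq_totient (α := ZMod k) hd)

lemma totient_gcd_mul_totient_lcm' (a b : ℕ) (ha : 0 < a) (hb : 0 < b) :
    Nat.totient (Nat.gcd a b) * Nat.totient (Nat.lcm a b)
      = Nat.totient a * Nat.totient b := by
  have h1 := Nat.totient_gcd_mul_totient_mul a b
  have h2 := Nat.totient_gcd_mul_totient_mul (Nat.gcd a b) (Nat.lcm a b)
  rw [Nat.gcd_mul_lcm] at h2
  have hg : Nat.gcd (Nat.gcd a b) (Nat.lcm a b) = Nat.gcd a b :=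
    Nat.gcd_eq_left ((Nat.gcd_dvd_left a b).trans (Nat.dvd_lcm_left a b))
  rw [hg] at h2
  have hgpos : 0 < Nat.gcd a b := Nat.gcd_pos_of_pos_left _ ha
  exact Nat.eq_of_mul_eq_mul_right hgpos (h2.symm.trans h1)

noncomputable def PhiZ : ArithmeticFunction ℤ := ⟨fun n => (Nat.totient n : ℤ), by simp⟩

lemma PhiZ_apply (j : ℕ) : PhiZ j = (Nat.totient j : ℤ) := rfl

lemma moebius_totient_sum (k : ℕ) (hk : k ≠ 0) :
    ∑ d ∈ k.divisors,
      (∑ e ∈ d.divisors, ArithmeticFunction.moebius e * (Nat.totient (d / e) : ℤ))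
      = (Nat.totient k : ℤ) := by
  have key : ∀ d : ℕ,
      (∑ e ∈ d.divisors, ArithmeticFunction.moebius e * (Nat.totient (d / e) : ℤ))
      = (ArithmeticFunction.moebius * PhiZ) d := by
    intro d
    rw [ArithmeticFunction.mul_apply, ← Nat.sum_divisorsAntidiagonal
      (fun e f => (ArithmeticFunction.moebius e : ℤ) * (Nat.totient f : ℤ))]
    exact Finset.sum_congr rfl fun p _ => by rw [PhiZ_apply]
  simp_rw [key]
  rw [← ArithmeticFunction.coe_mul_zeta_apply]
  have h2 : ArithmeticFunction.moebius * PhiZ *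
      ((ArithmeticFunction.zeta : ArithmeticFunction ℕ) : ArithmeticFunction ℤ) = PhiZ := by
    rw [mul_right_comm, ArithmeticFunction.moebius_mul_coe_zeta, one_mul]
  rw [h2, PhiZ_apply]

lemma card_multiples_divisors (m d : ℕ) (hm : m ≠ 0) (hd : d ∣ m) :
    (m.divisors.filter fun a => d ∣ a).card = (m / d).divisors.card := by
  have hd0 : d ≠ 0 := fun h => hm (by simpa [h] using hd)
  symm
  refine Finset.card_bij (fun b _ => d * b) ?_ ?_ ?_
  · intro b hb
    obtain ⟨hbd, -⟩ := Nat.mem_divisors.mp hb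
    refine Finset.mem_filter.mpr ⟨Nat.mem_divisors.mpr ⟨?_, hm⟩, Dvd.intro b rfl⟩
    calc d * b ∣ d * (m / d) := mul_dvd_mul_left d hbd
    _ = m := Nat.mul_div_cancel' hd
  · intro b₁ h₁ b₂ h₂ h
    exact Nat.eq_of_mul_eq_mul_left (Nat.pos_of_ne_zero hd0) h
  · intro a ha
    obtain ⟨ham, hda⟩ := Finset.mem_filter.mp ha
    obtain ⟨ham, -⟩ := Nat.mem_divisors.mp ham
    obtain ⟨b, rfl⟩ := hda
    refine ⟨b, ?_, rfl⟩
    obtain ⟨c, hc⟩ := ham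
    refine Nat.mem_divisors.mpr ⟨⟨c, ?_⟩, ?_⟩
    · rw [hc, Nat.mul_assoc, Nat.mul_div_cancel_left _ (Nat.pos_of_ne_zero hd0)]
    · exact (Nat.div_pos (Nat.le_of_dvd (Nat.pos_of_ne_zero hm) hd)
        (Nat.pos_of_ne_zero hd0)).ne'

lemma swap_sum (m n : ℕ) (hm : m ≠ 0) (hn : n ≠ 0) :
    ∑ d ∈ (Nat.gcd m n).divisors,
        (∑ e ∈ d.divisors, ArithmeticFunction.moebius e * (Nat.totient (d / e) : ℤ)) *
          ((m / d).divisors.card : ℤ) * ((n / d).divisors.card : ℤ)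
      = ∑ a ∈ m.divisors, ∑ b ∈ n.divisors, (Nat.totient (Nat.gcd a b) : ℤ) := by
  classical
  set F : ℕ → ℤ :=
    fun d => ∑ e ∈ d.divisors, ArithmeticFunction.moebius e * (Nat.totient (d / e) : ℤ)
    with hF
  have hmn : Nat.gcd m n ≠ 0 := Nat.gcd_ne_zero_left hm
  symm
  calc ∑ a ∈ m.divisors, ∑ b ∈ n.divisors, (Nat.totient (Nat.gcd a b) : ℤ)
      = ∑ a ∈ m.divisors, ∑ b ∈ n.divisors, ∑ d ∈ (Nat.gcd a b).divisors, F d := by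
        refine Finset.sum_congr rfl fun a ha => Finset.sum_congr rfl fun b hb => ?_
        rw [moebius_totient_sum _ (Nat.gcd_ne_zero_left (Nat.pos_of_mem_divisors ha).ne')]
    _ = ∑ a ∈ m.divisors, ∑ b ∈ n.divisors,
          ∑ d ∈ (Nat.gcd m n).divisors, if d ∣ Nat.gcd a b then F d else 0 := by
        refine Finset.sum_congr rfl fun a ha => Finset.sum_congr rfl fun b hb => ?_
        rw [← Finset.sum_filter, Nat.divisors_filter_dvd_of_dvd hmn
          (Nat.dvd_gcd ((Nat.gcd_dvd_left a b).trans (Nat.mem_divisors.mp ha).1)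
            ((Nat.gcd_dvd_right a b).trans (Nat.mem_divisors.mp hb).1))]
    _ = ∑ a ∈ m.divisors, ∑ d ∈ (Nat.gcd m n).divisors, ∑ b ∈ n.divisors,
          if d ∣ Nat.gcd a b then F d else 0 :=
        Finset.sum_congr rfl fun a _ => Finset.sum_comm
    _ = ∑ d ∈ (Nat.gcd m n).divisors, ∑ a ∈ m.divisors, ∑ b ∈ n.divisors,
          if d ∣ Nat.gcd a b then F d else 0 := Finset.sum_comm
    _ = ∑ d ∈ (Nat.gcd m n).divisors,
          F d * ((m / d).divisors.card : ℤ) * ((n / d).divisors.card : ℤ) := by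
        refine Finset.sum_congr rfl fun d hd => ?_
        have hdm : d ∣ m := (Nat.mem_divisors.mp hd).1.trans (Nat.gcd_dvd_left m n)
        have hdn : d ∣ n := (Nat.mem_divisors.mp hd).1.trans (Nat.gcd_dvd_right m n)
        calc ∑ a ∈ m.divisors, ∑ b ∈ n.divisors, (if d ∣ Nat.gcd a b then F d else 0)
            = ∑ a ∈ m.divisors.filter (d ∣ ·), ∑ b ∈ n.divisors.filter (d ∣ ·), F d := by
              rw [Finset.sum_filter (fun a => d ∣ a)
                (fun _ => ∑ b ∈ n.divisors.filter (d ∣ ·), F d)]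
              refine Finset.sum_congr rfl fun a _ => ?_
              by_cases h1 : d ∣ a
              · rw [if_pos h1, Finset.sum_filter (fun b => d ∣ b) (fun _ => F d)]
                refine Finset.sum_congr rfl fun b _ => ?_
                by_cases h2 : d ∣ b
                · rw [if_pos h2, if_pos (Nat.dvd_gcd h1 h2)]
                · rw [if_neg h2, if_neg fun h : d ∣ Nat.gcd a b => h2 (h.trans (Nat.gcd_dvd_right a b))]
              · rw [if_neg h1]
                exact Finset.sum_eq_zero fun b _ =>
                  if_neg fun h : d ∣ Nat.gcd a b => h1 (h.trans (Nat.gcd_dvd_left a b))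
          _ = F d * ((m / d).divisors.card : ℤ) * ((n / d).divisors.card : ℤ) := by
              rw [Finset.sum_const, Finset.sum_const,
                card_multiples_divisors m d hm hdm, card_multiples_divisors n d hn hdn,
                nsmul_eq_mul, nsmul_eq_mul]
              ring

theorem cyclic_subgroup_count_two' (m n : ℕ) (hm : 0 < m) (hn : 0 < n) :
    (Nat.card {H : AddSubgroup (ZMod m × ZMod n) // ∃ g, H = AddSubgroup.closure {g}} : ℤ) =
      ∑ d ∈ (Nat.gcd m n).divisors,
        (∑ e ∈ d.divisors, ArithmeticFunction.moebius e * (Nat.totient (d / e) : ℤ)) *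
          ((m / d).divisors.card : ℤ) * ((n / d).divisors.card : ℤ) := by
  classical
  haveI : NeZero m := ⟨hm.ne'⟩
  haveI : NeZero n := ⟨hn.ne'⟩
  set G := (ZMod m × ZMod n)
  have h1 : Nat.card {H : AddSubgroup G // ∃ g, H = AddSubgroup.closure {g}}
      = (Finset.univ.image fun g : G => zmultiples g).card := by
    have e : {H : AddSubgroup G // ∃ g, H = AddSubgroup.closure {g}}
        ≃ Set.range (fun g : G => zmultiples g) :=
      Equiv.subtypeEquivRight (fun H => by
        simp [AddSubgroup.zmultiples_eq_closure, Set.mem_range, eq_comm])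
    rw [Nat.card_congr e, Nat.card_eq_card_toFinset, Set.toFinset_range]
  have h2 : ((Finset.univ.image fun g : G => zmultiples g).card : ℚ)
      = ∑ a ∈ m.divisors, ∑ b ∈ n.divisors, (Nat.totient (Nat.gcd a b) : ℚ) := by
    rw [countA]
    rw [Fintype.sum_prod_type]
    have step1 : ∀ x : ZMod m, ∑ y : ZMod n,
        (1 : ℚ) / (Nat.totient (addOrderOf (x, y)))
        = ∑ b ∈ n.divisors, (Nat.totient b : ℚ) *
            ((1 : ℚ) / (Nat.totient (Nat.lcm (addOrderOf x) b))) := by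
      intro x
      rw [← sum_orderOf_zmod n hn (fun t => (1:ℚ) / (Nat.totient (Nat.lcm (addOrderOf x) t)))]
      exact Finset.sum_congr rfl fun y _ => by rw [Prod.addOrderOf]
    simp_rw [step1]
    rw [Finset.sum_comm]
    have step2 : ∀ b ∈ n.divisors, (∑ x : ZMod m,
        (Nat.totient b : ℚ) * ((1:ℚ) / (Nat.totient (Nat.lcm (addOrderOf x) b))))
        = ∑ a ∈ m.divisors, (Nat.totient a : ℚ) *
            ((Nat.totient b : ℚ) * ((1:ℚ) / (Nat.totient (Nat.lcm a b)))) := by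
      intro b _
      exact sum_orderOf_zmod m hm
        (fun t => (Nat.totient b : ℚ) * ((1:ℚ) / (Nat.totient (Nat.lcm t b))))
    rw [Finset.sum_congr rfl step2, Finset.sum_comm]
    refine Finset.sum_congr rfl fun a ha => Finset.sum_congr rfl fun b hb => ?_
    have hA : 0 < a := Nat.pos_of_mem_divisors ha
    have hB : 0 < b := Nat.pos_of_mem_divisors hb
    have hL : (0:ℚ) < (Nat.totient (Nat.lcm a b) : ℚ) := by
      exact_mod_cast Nat.totient_pos.mpr (Nat.pos_of_ne_zero (Nat.lcm_ne_zero hA.ne' hB.ne'))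
    have key : (Nat.totient (Nat.gcd a b) : ℚ) * (Nat.totient (Nat.lcm a b) : ℚ)
        = (Nat.totient a : ℚ) * (Nat.totient b : ℚ) := by
      exact_mod_cast totient_gcd_mul_totient_lcm' a b hA hB
    field_simp
    linarith [key]
  have h4 : Nat.card {H : AddSubgroup G // ∃ g, H = AddSubgroup.closure {g}}
      = ∑ a ∈ m.divisors, ∑ b ∈ n.divisors, Nat.totient (Nat.gcd a b) := by
    have h3 : (Nat.card {H : AddSubgroup G // ∃ g, H = AddSubgroup.closure {g}} : ℚ)
        = ((∑ a ∈ m.divisors, ∑ b ∈ n.divisors, Nat.totient (Nat.gcd a b) : ℕ) : ℚ) := by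
      rw [h1, h2]; push_cast; rfl
    exact_mod_cast h3
  rw [swap_sum m n hm.ne' hn.ne']
  exact_mod_cast h4
end

section
/- For every k ≥ 1 and positive integer n, the number of cyclic subgroups of ℤ_n^k (the direct product of k copies of ℤ_n) equals Σ_{d ∣ n} J_k(d)/φ(d), where J_k(d) = d^k · Π_{p ∣ d} (1 - 1/p^k) is the Jordan totient function of order k. -/
/-!
Sort the elements `g` of `G = ℤ_n^k` by the cyclic subgroup `⟨g⟩` they generate. A cyclic subgroup
of order `d` has exactly `φ(d)` generators, so the number of cyclic subgroups is
`∑_g 1 / φ(ord g) = ∑_{d ∣ n} N(d) / φ(d)`, where `N(d)` counts the elements of order `d`.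
The elements killed by `d ∣ n` form a copy of `ℤ_d^k`, so `∑_{e ∣ d} N(e) = d^k`. The Jordan
totient satisfies the same divisor-sum identity (both sides are multiplicative and agree on prime
powers by telescoping), and Möbius inversion gives `N(d) = J_k(d)`.
-/

open Finset ArithmeticFunction
open scoped ArithmeticFunction.zeta

namespace ArithmeticFunction

noncomputable def jordanTotient (k : ℕ) : ArithmeticFunction ℚ :=
  (pow k : ArithmeticFunction ℚ).pmul (prodPrimeFactors fun p => 1 - 1 / (p : ℚ) ^ k)

theorem jordanTotient_apply (k : ℕ) {d : ℕ} (hd : d ≠ 0) :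
    jordanTotient k d = (d : ℚ) ^ k * ∏ p ∈ d.primeFactors, (1 - 1 / (p : ℚ) ^ k) := by
  simp [jordanTotient, hd]

theorem isMultiplicative_jordanTotient (k : ℕ) : (jordanTotient k).IsMultiplicative :=
  isMultiplicative_pow.natCast.pmul (IsMultiplicative.prodPrimeFactors _)

theorem jordanTotient_prime_pow_succ (k : ℕ) {p : ℕ} (hp : p.Prime) (i : ℕ) :
    jordanTotient k (p ^ (i + 1)) = ((p : ℚ) ^ (i + 1)) ^ k - ((p : ℚ) ^ i) ^ k := by
  have hpk : (p : ℚ) ^ k ≠ 0 := pow_ne_zero _ (Nat.cast_ne_zero.mpr hp.ne_zero)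
  rw [jordanTotient_apply k (pow_ne_zero _ hp.ne_zero),
    Nat.primeFactors_prime_pow i.succ_ne_zero hp, prod_singleton]
  push_cast
  field_simp
  ring

theorem coe_zeta_mul_jordanTotient (k : ℕ) :
    (ζ : ArithmeticFunction ℚ) * jordanTotient k = pow k := by
  rw [IsMultiplicative.eq_iff_eq_on_prime_powers _
    (isMultiplicative_zeta.natCast.mul (isMultiplicative_jordanTotient k)) _
    isMultiplicative_pow.natCast]
  intro p i hp
  rw [coe_zeta_mul_apply, Nat.sum_divisors_prime_pow hp, sum_range_succ',
    sum_congr rfl fun j _ => jordanTotient_prime_pow_succ k hp j,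
    sum_range_sub (fun j => ((p : ℚ) ^ j) ^ k)]
  simp [(isMultiplicative_jordanTotient k).map_one, hp.ne_zero]

theorem sum_divisors_jordanTotient (k : ℕ) {d : ℕ} (hd : d ≠ 0) :
    ∑ e ∈ d.divisors, jordanTotient k e = (d : ℚ) ^ k := by
  have h := congr($(coe_zeta_mul_jordanTotient k) d)
  rwa [coe_zeta_mul_apply, natCoe_apply, pow_apply, if_neg (by simp [hd]), Nat.cast_pow] at h

end ArithmeticFunction

theorem Nat.eq_of_sum_divisors_eq {R : Type*} [AddCommGroup R] {f g : ℕ → R} {n : ℕ}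
    (hn : n ≠ 0) (h : ∀ d, d ∣ n → ∑ e ∈ d.divisors, f e = ∑ e ∈ d.divisors, g e) {d : ℕ}
    (hd : d ∣ n) : f d = g d := by
  have inversion (F : ℕ → R) := (sum_eq_iff_sum_smul_moebius_eq_on (f := F)
    (g := fun d => ∑ e ∈ d.divisors, g e) {d | d ∣ n} fun _ _ => dvd_trans).mp
  have hd0 : 0 < d := Nat.pos_of_dvd_of_pos hd (Nat.pos_of_ne_zero hn)
  rw [← inversion f (fun d _ hd => h d hd) d hd0 hd, inversion g (fun _ _ _ => rfl) d hd0 hd]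

section CyclicSubgroups

variable {G : Type*} [Group G]

@[to_additive]
theorem Subgroup.zpowers_eq_zpowers_iff_of_finite [Finite G] {g h : G} :
    zpowers h = zpowers g ↔ h ∈ zpowers g ∧ orderOf h = orderOf g := by
  refine ⟨fun hgh => ⟨hgh ▸ mem_zpowers h, by rw [← Nat.card_zpowers, hgh, Nat.card_zpowers]⟩,
    fun ⟨hmem, hord⟩ => eq_of_le_of_card_ge (zpowers_le.mpr hmem) ?_⟩
  rw [Nat.card_zpowers, Nat.card_zpowers, hord]

@[to_additive]
theorem Subgroup.card_zpowers_eq_zpowers [Finite G] (g : G) :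
    Nat.card {h : G // zpowers h = zpowers g} = Nat.totient (orderOf g) := by
  classical
  have : Fintype (zpowers g) := Fintype.ofFinite _
  calc Nat.card {h : G // zpowers h = zpowers g}
      = Nat.card {x : zpowers g // orderOf x = Fintype.card (zpowers g)} := by
        refine Nat.card_congr ((Equiv.subtypeEquivRight fun h =>
          zpowers_eq_zpowers_iff_of_finite).trans
          (Equiv.subtypeSubtypeEquivSubtypeInter _ _).symm |>.trans (Equiv.subtypeEquivRight ?_))
        intro x
        rw [orderOf_submonoid, ← Nat.card_eq_fintype_card, Nat.card_zpowers]
    _ = Nat.totient (orderOf g) := by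
        rw [Nat.card_eq_fintype_card, Fintype.card_subtype,
          IsCyclic.card_orderOf_eq_totient dvd_rfl, ← Nat.card_eq_fintype_card, Nat.card_zpowers]

@[to_additive card_cyclic_addSubgroups]
theorem card_cyclic_subgroups [Fintype G] :
    (Nat.card {H : Subgroup G // ∃ g, H = Subgroup.closure {g}} : ℚ) =
      ∑ g : G, 1 / (Nat.totient (orderOf g) : ℚ) := by
  classical
  have hrange : Nat.card {H : Subgroup G // ∃ g, H = Subgroup.closure {g}} =
      #(univ.image fun g : G => Subgroup.zpowers g) := by
    rw [← Set.toFinset_range, ← Nat.card_eq_card_toFinset]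
    exact Nat.card_congr (Equiv.subtypeEquivRight fun H => by
      simp only [Set.mem_range, Subgroup.zpowers_eq_closure, eq_comm])
  rw [hrange, card_eq_sum_ones, Nat.cast_sum]
  refine sum_image' _ fun g _ => ?_
  have hfiber : ∀ h ∈ ({h | Subgroup.zpowers h = Subgroup.zpowers g} : Finset G),
      1 / (Nat.totient (orderOf h) : ℚ) = 1 / (Nat.totient (orderOf g) : ℚ) := fun h hh => by
    rw [(Subgroup.zpowers_eq_zpowers_iff_of_finite.mp (mem_filter.mp hh).2).2]
  rw [sum_congr rfl hfiber, sum_const, ← Fintype.card_subtype, ← Nat.card_eq_fintype_card,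
    Subgroup.card_zpowers_eq_zpowers, nsmul_eq_mul, Nat.cast_one, mul_one_div_cancel]
  exact Nat.cast_ne_zero.mpr (Nat.totient_pos.mpr (orderOf_pos g)).ne'

end CyclicSubgroups

theorem sum_comp_addOrderOf {G M : Type*} [AddMonoid G] [Fintype G] [AddCommMonoid M] {n : ℕ}
    (hn : n ≠ 0) (hG : ∀ g : G, addOrderOf g ∣ n) (f : ℕ → M) :
    ∑ g : G, f (addOrderOf g) = ∑ d ∈ n.divisors, #{g : G | addOrderOf g = d} • f d := by
  rw [← sum_fiberwise_of_maps_to' fun g _ => Nat.mem_divisors.mpr ⟨hG g, hn⟩]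
  simp only [sum_const]

theorem card_nsmul_eq_zero_pi {ι A : Type*} [Fintype ι] [DecidableEq ι] [AddMonoid A] [Fintype A]
    [DecidableEq A] (d : ℕ) :
    #{g : ι → A | d • g = 0} = #{a : A | d • a = 0} ^ Fintype.card ι := by
  rw [← card_univ, ← prod_const, ← Fintype.card_piFinset]
  congr 1
  ext g
  simp [funext_iff]

theorem ZMod.card_nsmul_eq_zero {n d : ℕ} [NeZero n] (hd : d ∣ n) :
    #{a : ZMod n | d • a = 0} = d := by
  rw [← Fintype.card_subtype, ← Nat.card_eq_fintype_card]
  simpa [Nat.gcd_eq_right hd] using IsAddCyclic.card_nsmulAddMonoidHom_ker (ZMod n) d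

theorem ZMod.addOrderOf_pi_dvd {ι : Type*} {n : ℕ} (g : ι → ZMod n) : addOrderOf g ∣ n := by
  simp [addOrderOf_dvd_iff_nsmul_eq_zero, funext_iff]

theorem ZMod.card_pi_addOrderOf_eq_jordanTotient {ι : Type*} [Fintype ι] [DecidableEq ι]
    {n d : ℕ} [NeZero n] (hd : d ∣ n) :
    (#{g : ι → ZMod n | addOrderOf g = d} : ℚ) = jordanTotient (Fintype.card ι) d := by
  refine Nat.eq_of_sum_divisors_eq (f := fun e => (#{g : ι → ZMod n | addOrderOf g = e} : ℚ))
    (NeZero.ne n) (fun e he => ?_) hd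
  have he0 : e ≠ 0 := ne_zero_of_dvd_ne_zero (NeZero.ne n) he
  rw [sum_divisors_jordanTotient _ he0, ← Nat.cast_sum,
    sum_card_addOrderOf_eq_card_nsmul_eq_zero he0, card_nsmul_eq_zero_pi,
    ZMod.card_nsmul_eq_zero he, Nat.cast_pow]

theorem cyclic_subgroup_count_power_general (k : ℕ) (n : ℕ) (hn : 0 < n) :
    (Nat.card {H : AddSubgroup (Fin k → ZMod n) // ∃ g, H = AddSubgroup.closure {g}} : ℚ) =
      ∑ d ∈ n.divisors,
        ((d : ℚ) ^ k * ∏ p ∈ d.primeFactors, (1 - 1 / (p : ℚ) ^ k)) /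
          (Nat.totient d : ℚ) := by
  have : NeZero n := ⟨hn.ne'⟩
  rw [card_cyclic_addSubgroups,
    sum_comp_addOrderOf hn.ne' ZMod.addOrderOf_pi_dvd fun d => 1 / (Nat.totient d : ℚ)]
  refine sum_congr rfl fun d hd => ?_
  rw [nsmul_eq_mul, ZMod.card_pi_addOrderOf_eq_jordanTotient (Nat.dvd_of_mem_divisors hd),
    Fintype.card_fin, jordanTotient_apply k (Nat.pos_of_mem_divisors hd).ne', mul_one_div]

theorem cyclic_subgroup_count_power (k : ℕ) (hk : 1 ≤ k) (n : ℕ) (hn : 0 < n) :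
    (Nat.card {H : AddSubgroup (Fin k → ZMod n) // ∃ g, H = AddSubgroup.closure {g}} : ℚ) =
      ∑ d ∈ n.divisors,
        ((d : ℚ) ^ k * ∏ p ∈ d.primeFactors, (1 - 1 / (p : ℚ) ^ k)) /
          (Nat.totient d : ℚ) :=
  cyclic_subgroup_count_power_general k n hn
end

section
/- For all positive integers m and n, the total number of subgroups of ℤ_m × ℤ_n equals Σ_{i ∣ m} Σ_{j ∣ n} gcd(i, j). -/
/-!
A subgroup `I ≤ G × K` is determined by its projection `A` to `G`, its fibre `B` over `0` in `K`,
and the homomorphism `A → K ⧸ B` sending `g` to the class of any `k` with `(g, k) ∈ I`; every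
such triple arises. When `G` and `K` are finite cyclic, `K` has exactly one subgroup of each order
dividing `|K|` (the kernel of multiplication by that order), and a homomorphism between cyclic
groups is fixed by the image of a generator, which may be any element killed by `|A|`; so there
are `gcd |A| [K : B]` triples over each pair `(A, B)`.
-/

namespace AddSubgroup

variable {G K : Type*} [AddGroup G] [AddCommGroup K]

def graphMod (A : AddSubgroup G) (B : AddSubgroup K) (f : A →+ K ⧸ B) :
    AddSubgroup (G × K) where
  carrier := {p | ∃ h : p.1 ∈ A, f ⟨p.1, h⟩ = p.2}
  zero_mem' := ⟨A.zero_mem, f.map_zero⟩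
  add_mem' := by
    rintro ⟨g₁, k₁⟩ ⟨g₂, k₂⟩ ⟨h₁, e₁⟩ ⟨h₂, e₂⟩
    exact ⟨A.add_mem h₁ h₂,
      (f.map_add ⟨g₁, h₁⟩ ⟨g₂, h₂⟩).trans (congrArg₂ (· + ·) e₁ e₂)⟩
  neg_mem' := by
    rintro ⟨g, k⟩ ⟨h, e⟩
    exact ⟨A.neg_mem h, (f.map_neg ⟨g, h⟩).trans (congrArg Neg.neg e)⟩

variable {A : AddSubgroup G} {B : AddSubgroup K} {f : A →+ K ⧸ B}

theorem map_fst_graphMod : (graphMod A B f).map (AddMonoidHom.fst G K) = A := by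
  ext g
  refine ⟨fun ⟨p, ⟨hp, _⟩, hpg⟩ ↦ hpg ▸ hp, fun hg ↦ ?_⟩
  obtain ⟨k, hk⟩ := QuotientAddGroup.mk_surjective (f ⟨g, hg⟩)
  exact ⟨(g, k), ⟨hg, hk.symm⟩, rfl⟩

theorem comap_inr_graphMod : (graphMod A B f).comap (AddMonoidHom.inr G K) = B := by
  ext k
  change (∃ h, f ⟨0, h⟩ = k) ↔ k ∈ B
  simp only [A.zero_mem, exists_true_left]
  exact f.map_zero ▸ eq_comm.trans (QuotientAddGroup.eq_zero_iff k)

theorem graphMod_injective :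
    Function.Injective fun t : Σ A : AddSubgroup G, Σ B : AddSubgroup K, A →+ K ⧸ B ↦
      graphMod t.1 t.2.1 t.2.2 := by
  rintro ⟨A, B, f⟩ ⟨A', B', f'⟩ h
  dsimp only at h
  obtain rfl : A = A' := by
    simpa only [map_fst_graphMod] using congrArg (map (AddMonoidHom.fst G K)) h
  obtain rfl : B = B' := by
    simpa only [comap_inr_graphMod] using congrArg (comap (AddMonoidHom.inr G K)) h
  obtain rfl : f = f' := by
    ext a
    obtain ⟨k, hk⟩ := QuotientAddGroup.mk_surjective (f a)
    obtain ⟨_, hk'⟩ : ((a : G), k) ∈ graphMod A B f' := h ▸ ⟨a.2, hk.symm⟩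
    exact hk.symm.trans hk'.symm
  rfl

theorem graphMod_surjective :
    Function.Surjective fun t : Σ A : AddSubgroup G, Σ B : AddSubgroup K, A →+ K ⧸ B ↦
      graphMod t.1 t.2.1 t.2.2 := by
  intro I
  set B := I.comap (AddMonoidHom.inr G K)
  have fibre_eq {g : G} {k k' : K} (h : (g, k) ∈ I) (h' : (g, k') ∈ I) :
      (k : K ⧸ B) = k' := by
    rw [QuotientAddGroup.eq_iff_sub_mem]
    show (0, k - k') ∈ I
    simpa using I.sub_mem h h'
  have lift (a : I.map (AddMonoidHom.fst G K)) : ∃ k : K, ((a : G), k) ∈ I := by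
    obtain ⟨p, hp, hpa⟩ := a.2
    exact ⟨p.2, hpa ▸ hp⟩
  choose w hw using lift
  let f : I.map (AddMonoidHom.fst G K) →+ K ⧸ B :=
    .mk' (fun a ↦ w a) fun a b ↦ fibre_eq (hw (a + b)) (I.add_mem (hw a) (hw b))
  refine ⟨⟨_, B, f⟩, ?_⟩
  ext ⟨g, k⟩
  constructor
  · rintro ⟨hg, e⟩
    have hB : (0, w ⟨g, hg⟩ - k) ∈ I := QuotientAddGroup.eq_iff_sub_mem.mp e
    simpa using I.sub_mem (hw ⟨g, hg⟩) hB
  · intro hgk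
    have hg : g ∈ I.map (AddMonoidHom.fst G K) := ⟨(g, k), hgk, rfl⟩
    exact ⟨hg, fibre_eq (hw ⟨g, hg⟩) hgk⟩

end AddSubgroup

namespace IsAddCyclic

variable {G Q : Type*} [AddCommGroup Q] [IsAddCyclic Q] [Finite Q]

theorem card_addMonoidHom [AddGroup G] [IsAddCyclic G] :
    Nat.card (G →+ Q) = Nat.gcd (Nat.card G) (Nat.card Q) := by
  obtain ⟨a, ha⟩ := exists_generator (α := G)
  have hord := addOrderOf_eq_card_of_forall_mem_zmultiples ha
  let eval (φ : G →+ Q) : (nsmulAddMonoidHom (Nat.card G) : Q →+ Q).ker :=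
    ⟨φ a, by simp [← map_nsmul, ← hord, addOrderOf_nsmul_eq_zero]⟩
  have eval_bijective : Function.Bijective eval := by
    refine ⟨fun φ ψ h ↦ (AddMonoidHom.eq_iff_eq_on_generator ha φ ψ).mpr congr($h.1),
      fun q ↦ ?_⟩
    have hq : addOrderOf (q : Q) ∣ addOrderOf a :=
      addOrderOf_dvd_of_nsmul_eq_zero (by rw [hord]; exact q.2)
    exact ⟨addMonoidHomOfForallMemZMultiples ha hq,
      Subtype.ext (addMonoidHomOfForallMemZMultiples_apply_gen ha hq)⟩
  rw [Nat.card_eq_of_bijective eval eval_bijective, card_nsmulAddMonoidHom_ker, Nat.gcd_comm]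

theorem addSubgroup_eq_ker_nsmul_card (H : AddSubgroup Q) :
    H = (nsmulAddMonoidHom (Nat.card H) : Q →+ Q).ker := by
  refine AddSubgroup.eq_of_le_of_card_ge (fun x hx ↦ ?_) ?_
  · exact congr($(card_nsmul_eq_zero' (x := (⟨x, hx⟩ : H))).1)
  · rw [card_nsmulAddMonoidHom_ker, Nat.gcd_eq_right H.card_addSubgroup_dvd_card]

variable {M : Type*} [AddCommMonoid M] [Fintype (AddSubgroup Q)]

theorem sum_addSubgroup_card (φ : ℕ → M) :
    ∑ H : AddSubgroup Q, φ (Nat.card H) = ∑ d ∈ (Nat.card Q).divisors, φ d := by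
  refine Finset.sum_nbij (fun H ↦ Nat.card H) (fun H _ ↦ ?_) (fun H _ H' _ h ↦ ?_)
    (fun d hd ↦ ?_) fun _ _ ↦ rfl
  · exact Nat.mem_divisors.mpr ⟨H.card_addSubgroup_dvd_card, Nat.card_pos.ne'⟩
  · rw [addSubgroup_eq_ker_nsmul_card H, addSubgroup_eq_ker_nsmul_card H',
      show Nat.card H = _ from h]
  · refine ⟨(nsmulAddMonoidHom d : Q →+ Q).ker, Finset.mem_coe.mpr (Finset.mem_univ _), ?_⟩
    exact (card_nsmulAddMonoidHom_ker Q d).trans (Nat.gcd_eq_right (Nat.dvd_of_mem_divisors hd))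

theorem sum_addSubgroup_index (φ : ℕ → M) :
    ∑ H : AddSubgroup Q, φ H.index = ∑ d ∈ (Nat.card Q).divisors, φ d := by
  have index_eq (H : AddSubgroup Q) : H.index = Nat.card Q / Nat.card H :=
    Nat.eq_div_of_mul_eq_left Nat.card_pos.ne' H.index_mul_card
  simp only [index_eq, sum_addSubgroup_card fun d ↦ φ (Nat.card Q / d), Nat.sum_div_divisors]

end IsAddCyclic

instance AddMonoidHom.finite {M N : Type*} [AddZeroClass M] [AddZeroClass N] [Finite M]
    [Finite N] : Finite (M →+ N) :=
  FunLike.finite _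

theorem card_addSubgroup_prod_of_isAddCyclic {G K : Type*} [AddCommGroup G] [AddCommGroup K]
    [IsAddCyclic G] [IsAddCyclic K] [Finite G] [Finite K] :
    Nat.card (AddSubgroup (G × K)) =
      ∑ i ∈ (Nat.card G).divisors, ∑ j ∈ (Nat.card K).divisors, Nat.gcd i j := by
  have := Fintype.ofFinite (AddSubgroup G)
  have := Fintype.ofFinite (AddSubgroup K)
  have card_hom (A : AddSubgroup G) (B : AddSubgroup K) :
      Nat.card (A →+ K ⧸ B) = Nat.gcd (Nat.card A) B.index := by
    have : IsAddCyclic (K ⧸ B) := isAddCyclic_of_surjective _ (QuotientAddGroup.mk'_surjective B)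
    exact IsAddCyclic.card_addMonoidHom
  rw [← Nat.card_eq_of_bijective _
    ⟨AddSubgroup.graphMod_injective, AddSubgroup.graphMod_surjective⟩]
  simp only [Nat.card_sigma, card_hom, IsAddCyclic.sum_addSubgroup_index,
    IsAddCyclic.sum_addSubgroup_card fun i ↦ ∑ j ∈ (Nat.card K).divisors, Nat.gcd i j]

theorem subgroup_count_two (m n : ℕ) (hm : 0 < m) (hn : 0 < n) :
    Nat.card (AddSubgroup (ZMod m × ZMod n)) =
      ∑ i ∈ m.divisors, ∑ j ∈ n.divisors, Nat.gcd i j := by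
  have : NeZero m := ⟨hm.ne'⟩
  have : NeZero n := ⟨hn.ne'⟩
  simpa only [Nat.card_zmod] using
    card_addSubgroup_prod_of_isAddCyclic (G := ZMod m) (K := ZMod n)
end

section
/- For all positive integers m and n, the total number of subgroups of ℤ_m × ℤ_n equals Σ_{d ∣ gcd(m,n)} φ(d)·τ(m/d)·τ(n/d). -/
/-!
A subgroup of `ℤ_m × ℤ_n` is the image of a unique lattice `L ⊇ mℤ × nℤ` in `ℤ²`, and such a
lattice has a unique Hermite normal form basis `(a, c), (0, b)` with `0 ≤ c < b`; it contains
`mℤ × nℤ` iff `a ∣ m`, `b ∣ n` and `b ∣ (m / a) c`. For fixed `a` and `b` the admissible `c` are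
the solutions of `(m / a) c = 0` in `ℤ_b`, of which there are `gcd (b, m / a)`. Writing
`gcd (a, b) = ∑_{d ∣ gcd (a, b)} φ d` and exchanging the summations gives the formula.
-/

open Finset

def AddSubgroup.equivKerLeOfSurjective {G H : Type*} [AddGroup G] [AddGroup H] {f : G →+ H}
    (hf : Function.Surjective f) : AddSubgroup H ≃ {L : AddSubgroup G // f.ker ≤ L} where
  toFun S := ⟨S.comap f, S.ker_le_comap f⟩
  invFun L := L.1.map f
  left_inv S := S.map_comap_eq_self_of_surjective hf
  right_inv L := Subtype.ext <| by simp only [AddSubgroup.comap_map_eq, sup_eq_left.2 L.2]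

theorem Int.exists_addSubgroup_eq_zmultiples_natCast (H : AddSubgroup ℤ) :
    ∃ a : ℕ, H = AddSubgroup.zmultiples (a : ℤ) := by
  obtain ⟨g, rfl⟩ := Int.subgroup_cyclic H
  exact ⟨g.natAbs, by rw [Int.zmultiples_natAbs, AddSubgroup.zmultiples_eq_closure]⟩

namespace Nat

theorem card_filter_range_dvd_mul {b : ℕ} (hb : b ≠ 0) (k : ℕ) :
    #{c ∈ range b | b ∣ k * c} = b.gcd k := by
  have : NeZero b := ⟨hb⟩
  have hker : Nat.card (nsmulAddMonoidHom k : ZMod b →+ ZMod b).ker =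
      #{x : ZMod b | k • x = 0} := by
    rw [Nat.card_eq_fintype_card]
    exact Fintype.card_of_subtype _ (by simp)
  have hcyclic := IsAddCyclic.card_nsmulAddMonoidHom_ker (ZMod b) k
  rw [Nat.card_zmod, hker] at hcyclic
  rw [← hcyclic]
  refine card_nbij' (fun c => (c : ZMod b)) ZMod.val ?_ ?_ ?_ ?_
  · intro c hc
    simp_all [← ZMod.natCast_eq_zero_iff]
  · intro x hx
    simp_all [ZMod.val_lt, ← ZMod.natCast_eq_zero_iff]
  · intro c hc
    exact ZMod.val_cast_of_lt (mem_range.1 (mem_filter.1 hc).1)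
  · intro x _
    simp

theorem card_divisors_filter_dvd {m d : ℕ} (hd : d ∣ m) :
    #{a ∈ m.divisors | d ∣ a} = #(m / d).divisors := by
  obtain ⟨k, rfl⟩ := hd
  rcases eq_or_ne d 0 with rfl | hd
  · simp
  rw [Nat.mul_div_cancel_left _ (Nat.pos_of_ne_zero hd),
    ← Finset.card_image_of_injective k.divisors (mul_right_injective₀ hd)]
  congr 1
  ext a
  simp only [mem_filter, mem_image, Nat.mem_divisors, mul_ne_zero_iff, ne_eq]
  constructor
  · rintro ⟨⟨ha, -, hk⟩, e, rfl⟩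
    exact ⟨e, ⟨Nat.dvd_of_mul_dvd_mul_left (Nat.pos_of_ne_zero hd) ha, hk⟩, rfl⟩
  · rintro ⟨e, ⟨he, hk⟩, rfl⟩
    exact ⟨⟨mul_dvd_mul_left d he, hd, hk⟩, dvd_mul_right d e⟩

theorem sum_divisors_sum_divisors_gcd (m n : ℕ) :
    ∑ a ∈ m.divisors, ∑ b ∈ n.divisors, a.gcd b =
      ∑ d ∈ (m.gcd n).divisors, d.totient * #(m / d).divisors * #(n / d).divisors := by
  calc ∑ a ∈ m.divisors, ∑ b ∈ n.divisors, a.gcd b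
      = ∑ a ∈ m.divisors, ∑ b ∈ n.divisors, ∑ d ∈ (m.gcd n).divisors,
          if d ∣ a ∧ d ∣ b then d.totient else 0 := by
        refine sum_congr rfl fun a ha => sum_congr rfl fun b hb => ?_
        have hdvd : a.gcd b ∣ m.gcd n :=
          (Nat.gcd_dvd_gcd_of_dvd_left b (Nat.dvd_of_mem_divisors ha)).trans
            (Nat.gcd_dvd_gcd_of_dvd_right m (Nat.dvd_of_mem_divisors hb))
        have hfilter : {d ∈ (m.gcd n).divisors | d ∣ a ∧ d ∣ b} = (a.gcd b).divisors := by
          simp_rw [← Nat.dvd_gcd_iff]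
          exact Nat.divisors_filter_dvd_of_dvd
            (Nat.gcd_ne_zero_left (Nat.ne_zero_of_mem_divisors ha)) hdvd
        rw [← sum_filter, hfilter, Nat.sum_totient]
    _ = ∑ d ∈ (m.gcd n).divisors, ∑ a ∈ m.divisors, ∑ b ∈ n.divisors,
          if d ∣ a ∧ d ∣ b then d.totient else 0 :=
        (sum_congr rfl fun _ _ => sum_comm).trans sum_comm
    _ = ∑ d ∈ (m.gcd n).divisors,
          d.totient * #{a ∈ m.divisors | d ∣ a} * #{b ∈ n.divisors | d ∣ b} := by
        refine sum_congr rfl fun d _ => ?_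
        rw [card_filter, card_filter, mul_assoc, sum_mul_sum]
        simp only [mul_sum]
        refine sum_congr rfl fun a _ => sum_congr rfl fun b _ => ?_
        split_ifs <;> simp_all
    _ = ∑ d ∈ (m.gcd n).divisors, d.totient * #(m / d).divisors * #(n / d).divisors := by
        refine sum_congr rfl fun d hd => ?_
        have hdvd := Nat.dvd_of_mem_divisors hd
        rw [card_divisors_filter_dvd (hdvd.trans (Nat.gcd_dvd_left m n)),
          card_divisors_filter_dvd (hdvd.trans (Nat.gcd_dvd_right m n))]

end Nat

def hnfLattice (a b c : ℕ) : AddSubgroup (ℤ × ℤ) :=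
  AddSubgroup.closure {((a : ℤ), (c : ℤ)), (0, (b : ℤ))}

section hnfLattice

variable {a b c : ℕ}

theorem mem_hnfLattice {x y : ℤ} :
    (x, y) ∈ hnfLattice a b c ↔ ∃ k : ℤ, x = k * a ∧ (b : ℤ) ∣ y - k * c := by
  simp only [hnfLattice, AddSubgroup.mem_closure_pair, Prod.ext_iff, Prod.fst_add, Prod.snd_add,
    Prod.smul_fst, Prod.smul_snd, smul_eq_mul, mul_zero, add_zero]
  constructor
  · rintro ⟨k, l, rfl, rfl⟩
    exact ⟨k, rfl, ⟨l, by ring⟩⟩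
  · rintro ⟨k, rfl, l, hl⟩
    exact ⟨k, l, rfl, by linear_combination -hl⟩

theorem hnfLattice_le_iff {L : AddSubgroup (ℤ × ℤ)} :
    hnfLattice a b c ≤ L ↔ ((a : ℤ), (c : ℤ)) ∈ L ∧ (0, (b : ℤ)) ∈ L := by
  simp [hnfLattice, AddSubgroup.closure_le, Set.insert_subset_iff]

theorem dvd_of_mk_mem_hnfLattice {x y : ℤ} (h : (x, y) ∈ hnfLattice a b c) : (a : ℤ) ∣ x := by
  obtain ⟨k, rfl, -⟩ := mem_hnfLattice.1 h
  exact dvd_mul_left _ _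

theorem zero_mk_mem_hnfLattice (ha : a ≠ 0) {y : ℤ} :
    (0, y) ∈ hnfLattice a b c ↔ (b : ℤ) ∣ y := by
  simp [mem_hnfLattice, ha]

theorem natCast_mk_zero_mem_hnfLattice (ha : a ≠ 0) {m : ℕ} :
    ((m : ℤ), 0) ∈ hnfLattice a b c ↔ a ∣ m ∧ b ∣ m / a * c := by
  rw [mem_hnfLattice]
  constructor
  · rintro ⟨k, hk, hdvd⟩
    obtain ⟨j, rfl⟩ : a ∣ m := Int.natCast_dvd_natCast.1 ⟨k, by rw [hk, mul_comm]⟩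
    obtain rfl : k = j := by
      push_cast at hk
      exact (mul_right_cancel₀ (Int.natCast_ne_zero.2 ha) (by linarith)).symm
    rw [Nat.mul_div_cancel_left _ (Nat.pos_of_ne_zero ha)]
    refine ⟨dvd_mul_right a j, Int.natCast_dvd_natCast.1 ?_⟩
    simpa using hdvd
  · rintro ⟨⟨j, rfl⟩, hdvd⟩
    rw [Nat.mul_div_cancel_left _ (Nat.pos_of_ne_zero ha)] at hdvd
    exact ⟨j, by push_cast; ring, by simpa using Int.natCast_dvd_natCast.2 hdvd⟩

theorem hnfLattice_inj {a' b' c' : ℕ} (ha : a ≠ 0) (ha' : a' ≠ 0) (hc : c < b) (hc' : c' < b') :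
    hnfLattice a b c = hnfLattice a' b' c' ↔ a = a' ∧ b = b' ∧ c = c' := by
  refine ⟨fun h => ?_, by rintro ⟨rfl, rfl, rfl⟩; rfl⟩
  have gen₁ : ((a : ℤ), (c : ℤ)) ∈ hnfLattice a' b' c' := h ▸ (hnfLattice_le_iff.1 le_rfl).1
  have gen₁' : ((a' : ℤ), (c' : ℤ)) ∈ hnfLattice a b c := h ▸ (hnfLattice_le_iff.1 le_rfl).1
  have gen₂ : (0, (b : ℤ)) ∈ hnfLattice a' b' c' := h ▸ (hnfLattice_le_iff.1 le_rfl).2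
  have gen₂' : (0, (b' : ℤ)) ∈ hnfLattice a b c := h ▸ (hnfLattice_le_iff.1 le_rfl).2
  obtain rfl : a = a' := Nat.dvd_antisymm
    (Int.natCast_dvd_natCast.1 (dvd_of_mk_mem_hnfLattice gen₁'))
    (Int.natCast_dvd_natCast.1 (dvd_of_mk_mem_hnfLattice gen₁))
  obtain rfl : b = b' := Nat.dvd_antisymm
    (Int.natCast_dvd_natCast.1 ((zero_mk_mem_hnfLattice ha).1 gen₂'))
    (Int.natCast_dvd_natCast.1 ((zero_mk_mem_hnfLattice ha).1 gen₂))
  refine ⟨rfl, rfl, ?_⟩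
  obtain ⟨k, hk, hdvd⟩ := mem_hnfLattice.1 gen₁
  obtain rfl : k = 1 :=
    mul_right_cancel₀ (Int.natCast_ne_zero.2 ha) (hk.symm.trans (one_mul _).symm)
  rw [one_mul, ← Int.modEq_iff_dvd, Int.natCast_modEq_iff] at hdvd
  exact (hdvd.eq_of_lt_of_lt hc' hc).symm

theorem exists_eq_hnfLattice {L : AddSubgroup (ℤ × ℤ)} {m n : ℕ} (hm : m ≠ 0) (hn : n ≠ 0)
    (hmL : ((m : ℤ), 0) ∈ L) (hnL : (0, (n : ℤ)) ∈ L) :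
    ∃ a b c : ℕ, a ≠ 0 ∧ c < b ∧ L = hnfLattice a b c := by
  obtain ⟨a, hA⟩ := Int.exists_addSubgroup_eq_zmultiples_natCast (L.map (AddMonoidHom.fst ℤ ℤ))
  obtain ⟨b, hB⟩ := Int.exists_addSubgroup_eq_zmultiples_natCast (L.comap (AddMonoidHom.inr ℤ ℤ))
  have mem_fst {x : ℤ} : (∃ y, (x, y) ∈ L) ↔ (a : ℤ) ∣ x := by
    rw [← Int.mem_zmultiples_iff, ← hA]
    simp
  have mem_snd {y : ℤ} : (0, y) ∈ L ↔ (b : ℤ) ∣ y := by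
    rw [← Int.mem_zmultiples_iff, ← hB]
    rfl
  have ha : a ≠ 0 := by
    rintro rfl
    simpa [hm] using mem_fst.1 ⟨0, hmL⟩
  have hb : (b : ℤ) ≠ 0 := by
    intro hb
    simpa [hb, hn] using mem_snd.1 hnL
  obtain ⟨y, hy⟩ := mem_fst.2 (dvd_refl (a : ℤ))
  obtain ⟨c, hc⟩ : ∃ c : ℕ, (c : ℤ) = y % b := ⟨_, Int.toNat_of_nonneg (Int.emod_nonneg y hb)⟩
  have hcb : c < b := by have := Int.emod_lt_of_pos y (by omega : (0 : ℤ) < b); omega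
  have gen₁ : ((a : ℤ), (c : ℤ)) ∈ L := by
    convert L.sub_mem hy (mem_snd.2 (dvd_mul_right (b : ℤ) (y / b))) using 1
    simp [hc, Int.emod_def]
  refine ⟨a, b, c, ha, hcb, le_antisymm ?_ (hnfLattice_le_iff.2 ⟨gen₁, mem_snd.2 dvd_rfl⟩)⟩
  rintro ⟨x, z⟩ hxz
  obtain ⟨k, rfl⟩ := mem_fst.1 ⟨z, hxz⟩
  refine mem_hnfLattice.2 ⟨k, mul_comm _ _, mem_snd.1 ?_⟩
  convert L.sub_mem hxz (L.zsmul_mem gen₁ k) using 1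
  simp [mul_comm]

theorem hnfLattice_le_hnfLattice_iff {m n : ℕ} (ha : a ≠ 0) :
    hnfLattice m n 0 ≤ hnfLattice a b c ↔ a ∣ m ∧ b ∣ n ∧ b ∣ m / a * c := by
  rw [hnfLattice_le_iff, Nat.cast_zero, natCast_mk_zero_mem_hnfLattice ha,
    zero_mk_mem_hnfLattice ha, Int.natCast_dvd_natCast]
  tauto

end hnfLattice

theorem ker_prodMap_intCastAddHom (m n : ℕ) :
    ((Int.castAddHom (ZMod m)).prodMap (Int.castAddHom (ZMod n))).ker = hnfLattice m n 0 := by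
  ext ⟨x, y⟩
  simp [mem_hnfLattice, ZMod.intCast_zmod_eq_zero_iff_dvd, dvd_iff_exists_eq_mul_left]

theorem card_addSubgroup_zmod_prod (m n : ℕ) :
    Nat.card (AddSubgroup (ZMod m × ZMod n)) =
      Nat.card {L : AddSubgroup (ℤ × ℤ) // hnfLattice m n 0 ≤ L} := by
  rw [← ker_prodMap_intCastAddHom]
  exact Nat.card_congr (AddSubgroup.equivKerLeOfSurjective
    ((ZMod.intCast_surjective (n := m)).prodMap (ZMod.intCast_surjective (n := n))))

def hnfParams (m n : ℕ) : Finset ((_ : ℕ × ℕ) × ℕ) :=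
  (m.divisors ×ˢ n.divisors).sigma fun ab => {c ∈ range ab.2 | ab.2 ∣ m / ab.1 * c}

theorem mem_hnfParams {m n : ℕ} (hm : m ≠ 0) (hn : n ≠ 0) {t : (_ : ℕ × ℕ) × ℕ} :
    t ∈ hnfParams m n ↔
      t.1.1 ≠ 0 ∧ t.2 < t.1.2 ∧ hnfLattice m n 0 ≤ hnfLattice t.1.1 t.1.2 t.2 := by
  obtain ⟨⟨a, b⟩, c⟩ := t
  simp only [hnfParams, mem_sigma, mem_product, Nat.mem_divisors, mem_filter, mem_range]
  constructor
  · rintro ⟨⟨⟨ham, -⟩, hbn, -⟩, hcb, hdvd⟩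
    have ha := ne_zero_of_dvd_ne_zero hm ham
    exact ⟨ha, hcb, (hnfLattice_le_hnfLattice_iff ha).2 ⟨ham, hbn, hdvd⟩⟩
  · rintro ⟨ha, hcb, hle⟩
    obtain ⟨ham, hbn, hdvd⟩ := (hnfLattice_le_hnfLattice_iff ha).1 hle
    exact ⟨⟨⟨ham, hm⟩, hbn, hn⟩, hcb, hdvd⟩

theorem card_hnfParams_eq_card_le {m n : ℕ} (hm : m ≠ 0) (hn : n ≠ 0) :
    #(hnfParams m n) = Nat.card {L : AddSubgroup (ℤ × ℤ) // hnfLattice m n 0 ≤ L} := by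
  rw [← Nat.card_eq_finsetCard]
  refine Nat.card_eq_of_bijective
    (fun t => ⟨hnfLattice t.1.1.1 t.1.1.2 t.1.2, ((mem_hnfParams hm hn).1 t.2).2.2⟩) ⟨?_, ?_⟩
  · rintro ⟨⟨⟨a, b⟩, c⟩, ht⟩ ⟨⟨⟨a', b'⟩, c'⟩, ht'⟩ h
    obtain ⟨ha, hcb, -⟩ := (mem_hnfParams hm hn).1 ht
    obtain ⟨ha', hcb', -⟩ := (mem_hnfParams hm hn).1 ht'
    obtain ⟨rfl, rfl, rfl⟩ := (hnfLattice_inj ha ha' hcb hcb').1 (congrArg Subtype.val h)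
    rfl
  · rintro ⟨L, hL⟩
    obtain ⟨hmL, hnL⟩ := hnfLattice_le_iff.1 hL
    obtain ⟨a, b, c, ha, hcb, rfl⟩ := exists_eq_hnfLattice hm hn hmL hnL
    exact ⟨⟨⟨(a, b), c⟩, (mem_hnfParams hm hn).2 ⟨ha, hcb, hL⟩⟩, rfl⟩

theorem card_hnfParams (m n : ℕ) :
    #(hnfParams m n) = ∑ a ∈ m.divisors, ∑ b ∈ n.divisors, (m / a).gcd b := by
  rw [hnfParams, card_sigma, sum_product]
  refine sum_congr rfl fun a _ => sum_congr rfl fun b hb => ?_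
  exact (Nat.card_filter_range_dvd_mul (Nat.pos_of_mem_divisors hb).ne' _).trans (Nat.gcd_comm _ _)

theorem subgroup_count_two' (m n : ℕ) (hm : 0 < m) (hn : 0 < n) :
    Nat.card (AddSubgroup (ZMod m × ZMod n)) =
      ∑ d ∈ (Nat.gcd m n).divisors,
        Nat.totient d * (m / d).divisors.card * (n / d).divisors.card := by
  rw [card_addSubgroup_zmod_prod, ← card_hnfParams_eq_card_le hm.ne' hn.ne', card_hnfParams,
    Nat.sum_div_divisors m (fun a => ∑ b ∈ n.divisors, a.gcd b), Nat.sum_divisors_sum_divisors_gcd]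
end

section
/- For positive integers m, n, δ with δ ∣ mn, the number of subgroups of order δ of ℤ_m × ℤ_n equals Σ φ(ij/δ), where the sum runs over pairs (i, j) with i ∣ gcd(m, δ), j ∣ gcd(n, δ), and δ ∣ ij. -/
/-!
By Goursat's lemma, a subgroup `H ≤ G × K` amounts to its projection `A ≤ G`, the subgroup
`N = {k | (0, k) ∈ H} ≤ K`, and a homomorphism `A → K ⧸ N` whose graph `H` is; moreover
`|H| = |A| |N|`. When `G` and `K` are cyclic of orders `m` and `n`, subgroups are determined by
their orders `a ∣ m` and `e ∣ n`, and there are `gcd(a, n / e)` homomorphisms from a cyclic group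
of order `a` to one of order `n / e`. Writing `gcd(a, n / e) = ∑_{d ∣ gcd(a, n / e)} φ(d)` and
substituting `(i, j) = (a, e d)`, so that `δ = a e` and `d = i j / δ`, turns the resulting sum
into the stated one.
-/

open Function

namespace AddSubgroup

variable {G K : Type*} [AddCommGroup G] [AddCommGroup K]

def ofGoursatData (A : AddSubgroup G) (N : AddSubgroup K) (φ : A →+ K ⧸ N) :
    AddSubgroup (G × K) where
  carrier := {x | ∃ h : x.1 ∈ A, (x.2 : K ⧸ N) = φ ⟨x.1, h⟩}
  zero_mem' := ⟨A.zero_mem, (map_zero φ).symm⟩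
  add_mem' := by
    rintro x y ⟨hx, hφx⟩ ⟨hy, hφy⟩
    exact ⟨add_mem hx hy,
      (congrArg₂ (· + ·) hφx hφy).trans (map_add φ ⟨_, hx⟩ ⟨_, hy⟩).symm⟩
  neg_mem' := by
    rintro x ⟨hx, hφx⟩
    exact ⟨neg_mem hx, (congrArg Neg.neg hφx).trans (map_neg φ ⟨_, hx⟩).symm⟩

variable {A : AddSubgroup G} {N : AddSubgroup K} {φ : A →+ K ⧸ N}

theorem mem_ofGoursatData {x : G × K} :
    x ∈ ofGoursatData A N φ ↔ ∃ h : x.1 ∈ A, (x.2 : K ⧸ N) = φ ⟨x.1, h⟩ := Iff.rfl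

theorem map_fst_ofGoursatData : (ofGoursatData A N φ).map (AddMonoidHom.fst G K) = A := by
  ext a
  refine ⟨fun ⟨x, ⟨hx, _⟩, hxa⟩ => hxa ▸ hx, fun ha => ?_⟩
  obtain ⟨b, hb⟩ := QuotientAddGroup.mk_surjective (φ ⟨a, ha⟩)
  exact ⟨(a, b), ⟨ha, hb⟩, rfl⟩

theorem goursatSnd_ofGoursatData : (ofGoursatData A N φ).goursatSnd = N := by
  ext b
  have hφ0 : φ ⟨0, A.zero_mem⟩ = 0 := map_zero φ
  simp [mem_ofGoursatData, hφ0]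

theorem ofGoursatData_injective : Injective (ofGoursatData A N) := by
  intro φ ψ h
  ext a
  obtain ⟨b, hb⟩ := QuotientAddGroup.mk_surjective (φ a)
  have hmem : ((a : G), b) ∈ ofGoursatData A N φ := ⟨a.2, hb⟩
  rw [h] at hmem
  obtain ⟨_, hψ⟩ := hmem
  exact hb.symm.trans hψ

variable (H : AddSubgroup (G × K))

noncomputable def goursatHom : H.map (AddMonoidHom.fst G K) →+ K ⧸ H.goursatSnd :=
  ((AddMonoidHom.fst G K).addSubgroupMap H).liftOfSurjective
    ((AddMonoidHom.fst G K).addSubgroupMap_surjective H)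
    ⟨(QuotientAddGroup.mk' H.goursatSnd).comp ((AddMonoidHom.snd G K).comp H.subtype), by
      rintro ⟨⟨a, b⟩, hab⟩ hk
      obtain rfl : a = 0 := congrArg Subtype.val hk
      exact (QuotientAddGroup.eq_zero_iff b).mpr (mem_goursatSnd.mpr hab)⟩

variable {H}

theorem goursatHom_apply {x : G × K} (hx : x ∈ H) :
    goursatHom H ⟨x.1, mem_map_of_mem _ hx⟩ = (x.2 : K ⧸ H.goursatSnd) :=
  AddMonoidHom.liftOfRightInverse_comp_apply _ _ _ _ (⟨x, hx⟩ : H)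

variable (H)

theorem ofGoursatData_goursatHom :
    ofGoursatData (H.map (AddMonoidHom.fst G K)) H.goursatSnd (goursatHom H) = H := by
  ext x
  refine ⟨fun ⟨hx₁, hx₂⟩ => ?_, fun hx => ⟨_, (goursatHom_apply hx).symm⟩⟩
  obtain ⟨y, hy, hyx⟩ := mem_map.mp hx₁
  have hdiff : (0, x.2 - y.2) ∈ H := by
    rw [← mem_goursatSnd, ← QuotientAddGroup.eq_iff_sub_mem, hx₂, ← goursatHom_apply hy]
    exact congrArg _ (Subtype.ext hyx.symm)
  convert add_mem hy hdiff using 1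
  exact Prod.ext (by simpa using hyx.symm) (add_sub_cancel y.2 x.2).symm

noncomputable def kerFstEquivGoursatSnd :
    ((AddMonoidHom.fst G K).addSubgroupMap H).ker ≃ H.goursatSnd where
  toFun x := ⟨x.1.1.2, mem_goursatSnd.mpr <| by
    have h0 : x.1.1.1 = 0 := congrArg Subtype.val x.2
    simp [← h0]⟩
  invFun b := ⟨⟨(0, b), mem_goursatSnd.mp b.2⟩, rfl⟩
  left_inv x := Subtype.ext <| Subtype.ext <| Prod.ext (congrArg Subtype.val x.2).symm rfl

theorem card_eq_card_map_fst_mul_card_goursatSnd :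
    Nat.card H = Nat.card (H.map (AddMonoidHom.fst G K)) * Nat.card H.goursatSnd := by
  rw [card_eq_card_quotient_mul_card_addSubgroup ((AddMonoidHom.fst G K).addSubgroupMap H).ker,
    Nat.card_congr (QuotientAddGroup.quotientKerEquivOfSurjective _
      ((AddMonoidHom.fst G K).addSubgroupMap_surjective H)).toEquiv,
    Nat.card_congr (kerFstEquivGoursatSnd H)]

variable (G K)

theorem bijective_ofGoursatData :
    Bijective fun t : Σ p : AddSubgroup G × AddSubgroup K, p.1 →+ K ⧸ p.2 =>
      ofGoursatData t.1.1 t.1.2 t.2 := by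
  refine ⟨?_, fun H => ⟨⟨(_, _), goursatHom H⟩, ofGoursatData_goursatHom H⟩⟩
  rintro ⟨⟨A, N⟩, φ⟩ ⟨⟨A', N'⟩, φ'⟩ h
  dsimp only at h
  obtain rfl : A = A' := by
    simpa only [map_fst_ofGoursatData] using congrArg (map (AddMonoidHom.fst G K)) h
  obtain rfl : N = N' := by simpa only [goursatSnd_ofGoursatData] using congrArg goursatSnd h
  rw [ofGoursatData_injective h]

theorem card_addSubgroup_prod_of_card_eq [Fintype G] [Fintype K] (δ : ℕ) :
    Nat.card {H : AddSubgroup (G × K) // Nat.card H = δ} =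
      ∑ p : AddSubgroup G × AddSubgroup K with Nat.card p.1 * Nat.card p.2 = δ,
        Nat.card (p.1 →+ K ⧸ p.2) := by
  have hcard (t : Σ p : AddSubgroup G × AddSubgroup K, p.1 →+ K ⧸ p.2) :
      Nat.card (ofGoursatData t.1.1 t.1.2 t.2) = Nat.card t.1.1 * Nat.card t.1.2 := by
    rw [card_eq_card_map_fst_mul_card_goursatSnd, map_fst_ofGoursatData, goursatSnd_ofGoursatData]
  have (p : AddSubgroup G × AddSubgroup K) : Finite (p.1 →+ K ⧸ p.2) :=
    .of_injective _ DFunLike.coe_injective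
  rw [← Nat.card_congr ((Equiv.ofBijective _ (bijective_ofGoursatData G K)).subtypeEquiv
      fun t => (hcard t).symm.congr_left),
    Nat.card_congr (Equiv.subtypeSigmaEquiv (fun p => p.1 →+ K ⧸ p.2)
      fun p : AddSubgroup G × AddSubgroup K => Nat.card p.1 * Nat.card p.2 = δ),
    Nat.card_sigma]
  exact (Finset.sum_subtype _ (fun p => by simp)
    fun p : AddSubgroup G × AddSubgroup K => Nat.card (p.1 →+ K ⧸ p.2)).symm

theorem card_quotient_eq_card_div {G : Type*} [AddGroup G] [Finite G] (H : AddSubgroup G) :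
    Nat.card (G ⧸ H) = Nat.card G / Nat.card H := by
  rw [← H.index_eq_card, ← H.index_mul_card, Nat.mul_div_cancel _ Nat.card_pos]

end AddSubgroup

namespace IsAddCyclic

theorem card_addMonoidHom_s12 (A B : Type*) [AddGroup A] [IsAddCyclic A] [AddCommGroup B]
    [IsAddCyclic B] [Finite B] :
    Nat.card (A →+ B) = (Nat.card A).gcd (Nat.card B) := by
  let e : (A →+ B) ≃ (nsmulAddMonoidHom (α := B) (Nat.card A)).ker :=
    ((zmodAddCyclicAddEquiv inferInstance).addMonoidHomCongrLeftEquiv.symm.trans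
      (ZMod.lift _).symm).trans <| (zmultiplesHom B).symm.subtypeEquiv fun f => by
        simp [← natCast_zsmul, ← map_zsmul]
  rw [Nat.card_congr e, card_nsmulAddMonoidHom_ker, Nat.gcd_comm]

variable {G : Type*} [AddCommGroup G] [IsAddCyclic G]

theorem eq_ker_nsmul_card [Finite G] (H : AddSubgroup G) :
    H = (nsmulAddMonoidHom (Nat.card H) : G →+ G).ker := by
  refine AddSubgroup.eq_of_le_of_card_ge (fun x hx => ?_) ?_
  · exact congrArg Subtype.val (card_nsmul_eq_zero' (x := (⟨x, hx⟩ : H)))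
  · rw [card_nsmulAddMonoidHom_ker, Nat.gcd_eq_right H.card_addSubgroup_dvd_card]

theorem card_ker_nsmul_of_dvd [Finite G] {d : ℕ} (hd : d ∣ Nat.card G) :
    Nat.card (nsmulAddMonoidHom (α := G) d).ker = d := by
  rw [card_nsmulAddMonoidHom_ker, Nat.gcd_eq_right hd]

theorem sum_addSubgroup [Fintype G] {M : Type*} [AddCommMonoid M] (f : ℕ → M) :
    ∑ H : AddSubgroup G, f (Nat.card H) = ∑ d ∈ (Nat.card G).divisors, f d := by
  refine Finset.sum_nbij' (fun H => Nat.card H) (fun d => (nsmulAddMonoidHom d).ker)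
    ?_ ?_ ?_ ?_ ?_
  · exact fun H _ => Nat.mem_divisors.mpr ⟨H.card_addSubgroup_dvd_card, Nat.card_pos.ne'⟩
  · exact fun _ _ => Finset.mem_univ _
  · exact fun H _ => (eq_ker_nsmul_card H).symm
  · exact fun d hd => card_ker_nsmul_of_dvd (Nat.dvd_of_mem_divisors hd)
  · exact fun _ _ => rfl

theorem sum_addSubgroup_prod {K : Type*} [AddCommGroup K] [IsAddCyclic K] [Fintype G]
    [Fintype K] {M : Type*} [AddCommMonoid M] (f : ℕ → ℕ → M) :
    ∑ p : AddSubgroup G × AddSubgroup K, f (Nat.card p.1) (Nat.card p.2) =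
      ∑ q ∈ (Nat.card G).divisors ×ˢ (Nat.card K).divisors, f q.1 q.2 := by
  simp only [Fintype.sum_prod_type, Finset.sum_product]
  rw [sum_addSubgroup fun a => ∑ N : AddSubgroup K, f a (Nat.card N)]
  simp only [sum_addSubgroup]

variable (G) in
theorem card_addSubgroup_prod_of_card_eq (K : Type*) [AddCommGroup K] [IsAddCyclic K]
    [Fintype G] [Fintype K] (δ : ℕ) :
    Nat.card {H : AddSubgroup (G × K) // Nat.card H = δ} =
      ∑ q ∈ (Nat.card G).divisors ×ˢ (Nat.card K).divisors with q.1 * q.2 = δ,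
        q.1.gcd (Nat.card K / q.2) := by
  have card_hom (A : AddSubgroup G) (N : AddSubgroup K) :
      Nat.card (A →+ K ⧸ N) = (Nat.card A).gcd (Nat.card K / Nat.card N) := by
    have := isAddCyclic_of_surjective _ (QuotientAddGroup.mk'_surjective N)
    rw [card_addMonoidHom_s12, N.card_quotient_eq_card_div]
  rw [AddSubgroup.card_addSubgroup_prod_of_card_eq]
  simp only [card_hom, Finset.sum_filter]
  exact sum_addSubgroup_prod fun a e => if a * e = δ then a.gcd (Nat.card K / e) else 0

end IsAddCyclic

theorem Nat.mul_dvd_gcd_mul_iff {n i e d : ℕ} (he : e ≠ 0) :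
    e * d ∣ n.gcd (i * e) ↔ e ∣ n ∧ d ∣ i.gcd (n / e) := by
  rw [Nat.dvd_gcd_iff, Nat.dvd_gcd_iff, mul_comm i,
    Nat.mul_dvd_mul_iff_left (Nat.pos_of_ne_zero he)]
  constructor
  · rintro ⟨hn, hi⟩
    have hen : e ∣ n := (dvd_mul_right e d).trans hn
    exact ⟨hen, hi, (Nat.dvd_div_iff_mul_dvd hen).mpr hn⟩
  · rintro ⟨hen, hi, hd⟩
    exact ⟨(Nat.dvd_div_iff_mul_dvd hen).mp hd, hi⟩

theorem Nat.exists_mul_eq_of_dvd_gcd {m n δ i j : ℕ} (hm : m ≠ 0) (hn : n ≠ 0)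
    (hi : i ∣ m.gcd δ) (hj : j ∣ n.gcd δ) (hδ : δ ∣ i * j) :
    ∃ e d, δ = i * e ∧ j = e * d ∧ e ∣ n ∧ d ∣ i.gcd (n / e) := by
  obtain ⟨him, e, rfl⟩ := Nat.dvd_gcd_iff.mp hi
  have hi0 : i ≠ 0 := ne_zero_of_dvd_ne_zero hm him
  obtain ⟨d, rfl⟩ := (Nat.mul_dvd_mul_iff_left (Nat.pos_of_ne_zero hi0)).mp hδ
  have he0 : e ≠ 0 := left_ne_zero_of_mul (ne_zero_of_dvd_ne_zero (Nat.gcd_ne_zero_left hn) hj)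
  exact ⟨e, d, rfl, rfl, (Nat.mul_dvd_gcd_mul_iff he0).mp hj⟩

theorem Nat.sum_gcd_div_eq_sum_totient {m n : ℕ} (hm : m ≠ 0) (hn : n ≠ 0) (δ : ℕ) :
    ∑ q ∈ m.divisors ×ˢ n.divisors with q.1 * q.2 = δ, q.1.gcd (n / q.2) =
      ∑ ij ∈ (m.gcd δ).divisors ×ˢ (n.gcd δ).divisors with δ ∣ ij.1 * ij.2,
        Nat.totient (ij.1 * ij.2 / δ) := by
  rw [Finset.sum_congr rfl fun q _ => (Nat.sum_totient _).symm, Finset.sum_sigma']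
  refine Finset.sum_nbij (fun x => (x.1.1, x.1.2 * x.2)) ?_ ?_ ?_ ?_
  · rintro ⟨⟨i, e⟩, d⟩ hx
    simp only [Finset.mem_sigma, Finset.mem_filter, Finset.mem_product, Nat.mem_divisors] at hx ⊢
    obtain ⟨⟨⟨⟨hi, -⟩, he, -⟩, rfl⟩, hd, -⟩ := hx
    exact ⟨⟨⟨Nat.dvd_gcd hi (dvd_mul_right i e), Nat.gcd_ne_zero_left hm⟩,
      (Nat.mul_dvd_gcd_mul_iff (ne_zero_of_dvd_ne_zero hn he)).mpr ⟨he, hd⟩,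
      Nat.gcd_ne_zero_left hn⟩, Dvd.intro d (mul_assoc i e d)⟩
  · rintro ⟨⟨i, e⟩, d⟩ hx ⟨⟨i', e'⟩, d'⟩ hx' h
    simp only [Finset.mem_coe, Finset.mem_sigma, Finset.mem_filter, Finset.mem_product,
      Nat.mem_divisors, Prod.mk.injEq] at hx hx' h
    obtain ⟨⟨⟨⟨hi, -⟩, he, -⟩, hie⟩, -⟩ := hx
    obtain ⟨⟨-, hie'⟩, -⟩ := hx'
    obtain ⟨rfl, hed⟩ := h
    obtain rfl : e = e' := Nat.eq_of_mul_eq_mul_left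
      (Nat.pos_of_ne_zero (ne_zero_of_dvd_ne_zero hm hi)) (hie.trans hie'.symm)
    obtain rfl : d = d' :=
      Nat.eq_of_mul_eq_mul_left (Nat.pos_of_ne_zero (ne_zero_of_dvd_ne_zero hn he)) hed
    rfl
  · rintro ⟨i, j⟩ h
    simp only [Finset.mem_coe, Finset.mem_filter, Finset.mem_product, Nat.mem_divisors] at h
    obtain ⟨⟨⟨hi, -⟩, hj, -⟩, hδ⟩ := h
    obtain ⟨e, d, rfl, rfl, he, hd⟩ := Nat.exists_mul_eq_of_dvd_gcd hm hn hi hj hδ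
    refine ⟨⟨(i, e), d⟩, ?_, rfl⟩
    simp only [Finset.mem_coe, Finset.mem_sigma, Finset.mem_filter, Finset.mem_product,
      Nat.mem_divisors]
    have him : i ∣ m := (Nat.dvd_gcd_iff.mp hi).1
    exact ⟨⟨⟨⟨him, hm⟩, he, hn⟩, trivial⟩, hd,
      Nat.gcd_ne_zero_left (ne_zero_of_dvd_ne_zero hm him)⟩
  · rintro ⟨⟨i, e⟩, d⟩ hx
    simp only [Finset.mem_sigma, Finset.mem_filter, Finset.mem_product, Nat.mem_divisors] at hx
    obtain ⟨⟨⟨⟨hi, -⟩, he, -⟩, rfl⟩, -⟩ := hx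
    rw [← mul_assoc, Nat.mul_div_cancel_left d (Nat.pos_of_ne_zero
      (mul_ne_zero (ne_zero_of_dvd_ne_zero hm hi) (ne_zero_of_dvd_ne_zero hn he)))]

theorem subgroup_count_of_order_general (m n δ : ℕ) (hm : 0 < m) (hn : 0 < n) :
    Nat.card {H : AddSubgroup (ZMod m × ZMod n) // Nat.card H = δ} =
      ∑ ij ∈ ((Nat.gcd m δ).divisors ×ˢ (Nat.gcd n δ).divisors).filter
          (fun ij => δ ∣ ij.1 * ij.2),
        Nat.totient (ij.1 * ij.2 / δ) := by
  have : NeZero m := ⟨hm.ne'⟩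
  have : NeZero n := ⟨hn.ne'⟩
  rw [IsAddCyclic.card_addSubgroup_prod_of_card_eq, Nat.card_zmod, Nat.card_zmod]
  exact Nat.sum_gcd_div_eq_sum_totient hm.ne' hn.ne' δ

theorem subgroup_count_of_order (m n δ : ℕ) (hm : 0 < m) (hn : 0 < n) (hδ : δ ∣ m * n) :
    Nat.card {H : AddSubgroup (ZMod m × ZMod n) // Nat.card H = δ} =
      ∑ ij ∈ ((Nat.gcd m δ).divisors ×ˢ (Nat.gcd n δ).divisors).filter
          (fun ij => δ ∣ ij.1 * ij.2),
        Nat.totient (ij.1 * ij.2 / δ) :=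
  subgroup_count_of_order_general m n δ hm hn
end

section
/- Let m, n, A, B be positive integers with A ∣ B, AB ∣ mn and A ∤ gcd(m, n). Then ℤ_m × ℤ_n has no subgroup isomorphic to ℤ_A × ℤ_B. -/
open Finset

lemma card_ker_le_gcd (A m : ℕ) (hm : 0 < m) (hA : 0 < A) [NeZero m] [DecidableEq (ZMod m)] :
    #(univ.filter fun x : ZMod m => A • x = 0) ≤ Nat.gcd A m := by
  have hg : 0 < Nat.gcd A m := Nat.gcd_pos_of_pos_left m hA
  calc #(univ.filter fun x : ZMod m => A • x = 0)
      ≤ #(univ.filter fun x : ZMod m => Nat.gcd A m • x = 0) := by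
        apply Finset.card_le_card
        intro x hx
        simp only [mem_filter, mem_univ, true_and] at hx ⊢
        have h1 : addOrderOf x ∣ A := addOrderOf_dvd_of_nsmul_eq_zero hx
        have h2 : addOrderOf x ∣ m := by
          simpa [ZMod.card m] using addOrderOf_dvd_card (x := x)
        exact addOrderOf_dvd_iff_nsmul_eq_zero.mp (Nat.dvd_gcd h1 h2)
    _ ≤ Nat.gcd A m := IsAddCyclic.card_nsmul_eq_zero_le hg

theorem no_subgroup_of_isomorphism_type (m n A B : ℕ) (hm : 0 < m) (hn : 0 < n)
    (hA : 0 < A) (hB : 0 < B) (hAB : A ∣ B) (hABmn : A * B ∣ m * n)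
    (h : ¬ A ∣ Nat.gcd m n) :
    ¬ ∃ H : AddSubgroup (ZMod m × ZMod n), Nonempty (H ≃+ (ZMod A × ZMod B)) := by
  classical
  rintro ⟨H, ⟨e⟩⟩
  haveI : NeZero m := ⟨hm.ne'⟩
  haveI : NeZero n := ⟨hn.ne'⟩
  haveI : NeZero A := ⟨hA.ne'⟩
  haveI : NeZero B := ⟨hB.ne'⟩
  obtain ⟨C, hC⟩ := hAB
  have hCpos : 0 < C := by
    rcases Nat.eq_zero_or_pos C with rfl | hc
    · simp at hC; omega
    · exact hc
  -- injection g : ZMod A → ZMod B, b ↦ C * b.val, with A • g b = 0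
  set g : ZMod A → ZMod B := fun b => ((C * b.val : ℕ) : ZMod B) with hg
  have hginj : Function.Injective g := by
    intro b1 b2 hb
    have h1 : C * b1.val < B := by
      rw [hC, mul_comm A C]; exact (Nat.mul_lt_mul_left hCpos).mpr (ZMod.val_lt b1)
    have h2 : C * b2.val < B := by
      rw [hC, mul_comm A C]; exact (Nat.mul_lt_mul_left hCpos).mpr (ZMod.val_lt b2)
    have := (ZMod.natCast_eq_natCast_iff' _ _ _).mp hb
    rw [Nat.mod_eq_of_lt h1, Nat.mod_eq_of_lt h2] at this
    have : b1.val = b2.val := Nat.eq_of_mul_eq_mul_left hCpos this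
    exact ZMod.val_injective _ this
  have hgkill : ∀ b : ZMod A, A • g b = 0 := by
    intro b
    have : ((A * (C * b.val) : ℕ) : ZMod B) = 0 := by
      rw [ZMod.natCast_eq_zero_iff]
      exact ⟨b.val, by rw [hC]; ring⟩
    simpa [hg, nsmul_eq_mul, ← Nat.cast_mul] using this
  -- the full map F : ZMod A × ZMod A → product, landing in the A-torsion
  set F : ZMod A × ZMod A → ZMod m × ZMod n := fun p => (e.symm (p.1, g p.2) : ZMod m × ZMod n)
  have hFinj : Function.Injective F := by
    intro p q hpq
    have := Subtype.coe_injective hpq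
    have := e.symm.injective this
    obtain ⟨h1, h2⟩ := Prod.mk.inj this
    exact Prod.ext h1 (hginj h2)
  have hFkill : ∀ p : ZMod A × ZMod A, A • F p = 0 := by
    intro p
    have hk : A • ((p.1, g p.2) : ZMod A × ZMod B) = 0 := by
      ext
      · simp [ZModModule.char_nsmul_eq_zero]
      · simpa using hgkill p.2
    have : A • e.symm (p.1, g p.2) = 0 := by
      rw [← map_nsmul, hk, map_zero]
    calc A • F p = ((A • e.symm (p.1, g p.2) : H) : ZMod m × ZMod n) := by
          simp [F, AddSubgroup.coe_nsmul]
      _ = 0 := by rw [this]; rfl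
  -- counting
  have key : A * A ≤ #(univ.filter fun x : ZMod m × ZMod n => A • x = 0) := by
    have : A * A = Fintype.card (ZMod A × ZMod A) := by simp [ZMod.card]
    rw [this]
    have : Fintype.card (ZMod A × ZMod A) = #(Finset.univ.image F) :=
      (Finset.card_image_of_injective _ hFinj).symm ▸ (by simp [Finset.card_image_of_injective _ hFinj])
    rw [this]
    apply Finset.card_le_card
    intro x hx
    simp only [Finset.mem_image, mem_filter, mem_univ, true_and] at hx ⊢
    obtain ⟨p, _, rfl⟩ := hx
    exact hFkill p
  -- upper bound
  have hsplit : #(univ.filter fun x : ZMod m × ZMod n => A • x = 0)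
      = #(univ.filter fun x : ZMod m => A • x = 0) * #(univ.filter fun y : ZMod n => A • y = 0) := by
    rw [← Finset.card_product]
    congr 1
    ext ⟨x, y⟩
    simp [Prod.ext_iff]
  have hbm : #(univ.filter fun x : ZMod m => A • x = 0) ≤ Nat.gcd A m :=
    card_ker_le_gcd A m hm hA
  have hbn : #(univ.filter fun y : ZMod n => A • y = 0) ≤ Nat.gcd A n :=
    card_ker_le_gcd A n hn hA
  -- one gcd is strictly smaller
  have hnot : ¬ A ∣ m ∨ ¬ A ∣ n := by
    by_contra hc
    push_neg at hc
    exact h (Nat.dvd_gcd hc.1 hc.2)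
  have hgm : Nat.gcd A m ≤ A := Nat.le_of_dvd hA (Nat.gcd_dvd_left _ _)
  have hgn : Nat.gcd A n ≤ A := Nat.le_of_dvd hA (Nat.gcd_dvd_left _ _)
  have hlt : Nat.gcd A m * Nat.gcd A n < A * A := by
    rcases hnot with hx | hx
    · have : Nat.gcd A m < A := lt_of_le_of_ne hgm (fun he => hx (he ▸ Nat.gcd_dvd_right A m))
      calc Nat.gcd A m * Nat.gcd A n < A * Nat.gcd A n :=
            (Nat.mul_lt_mul_right (Nat.gcd_pos_of_pos_left n hA)).mpr this
        _ ≤ A * A := Nat.mul_le_mul_left A hgn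
    · have : Nat.gcd A n < A := lt_of_le_of_ne hgn (fun he => hx (he ▸ Nat.gcd_dvd_right A n))
      calc Nat.gcd A m * Nat.gcd A n ≤ A * Nat.gcd A n := Nat.mul_le_mul_right _ hgm
        _ < A * A := (Nat.mul_lt_mul_left hA).mpr this
  have : A * A < A * A := by
    calc A * A ≤ _ := key
      _ = _ := hsplit
      _ ≤ Nat.gcd A m * Nat.gcd A n := Nat.mul_le_mul hbm hbn
      _ < A * A := hlt
  exact absurd this (lt_irrefl _)
end

section
/- Let m, n, A, B be positive integers with A ∣ B, AB ∣ mn and A ∣ gcd(m, n). Then the number of subgroups of ℤ_m × ℤ_n isomorphic to ℤ_A × ℤ_B equals Σ φ(ij/(AB)), where the sum is over pairs (i, j) with i ∣ m, j ∣ n, AB ∣ ij and lcm(i, j) = B. -/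
/-!
By Goursat's lemma a subgroup `H` of `ℤ_m × ℤ_n` is determined by its projections
`⟨m/i⟩ ≤ ℤ_m` and `⟨n/j⟩ ≤ ℤ_n`, the index `q` of `H ∩ (0 × ℤ_n)` in `⟨n/j⟩`, and a unit `r`
of `ℤ_q`: `H = {(x·m/i, y·n/j) | y ≡ r x mod q}`, with `q ∣ gcd(i, j)`. Such an `H` has order
`i j / q` and exponent `lcm(i, j)`, so `H ≅ ℤ_A × ℤ_B` forces `lcm(i, j) = B` and `q = ij/(AB)`.
Conversely, for these parameters the element `(m/i, y·n/j)`, with `y` a lift of `r` prime to `j`,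
has order `B`, and a Bézout correction of it yields a complement of order `A`. Hence each
admissible pair `(i, j)` contributes `φ(ij/(AB))` subgroups, one for each unit `r`.
-/

open AddSubgroup Function

section CyclicSubgroups

variable {n d : ℕ} [NeZero n]

lemma addOrderOf_natCast_div (hd : d ∣ n) : addOrderOf ((n / d : ℕ) : ZMod n) = d := by
  rw [ZMod.addOrderOf_coe _ (NeZero.ne n), Nat.gcd_eq_right (Nat.div_dvd_of_dvd hd),
    Nat.div_div_self hd (NeZero.ne n)]

lemma zsmul_natCast_div_eq_zero_iff (hd : d ∣ n) (z : ℤ) :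
    z • ((n / d : ℕ) : ZMod n) = 0 ↔ (d : ℤ) ∣ z := by
  rw [← addOrderOf_dvd_iff_zsmul_eq_zero, addOrderOf_natCast_div hd]

lemma card_zmultiples_natCast_div (hd : d ∣ n) :
    Nat.card (zmultiples ((n / d : ℕ) : ZMod n)) = d := by
  rw [Nat.card_zmultiples, addOrderOf_natCast_div hd]

lemma zmultiples_natCast_div_eq_ker (hd : d ∣ n) :
    zmultiples ((n / d : ℕ) : ZMod n) = (nsmulAddMonoidHom d).ker := by
  refine eq_of_le_of_card_ge (zmultiples_le.2 ?_) ?_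
  · rw [AddMonoidHom.mem_ker, nsmulAddMonoidHom_apply, nsmul_eq_mul, ← Nat.cast_mul,
      Nat.mul_div_cancel' hd, ZMod.natCast_self]
  · rw [IsAddCyclic.card_nsmulAddMonoidHom_ker, Nat.card_zmod, Nat.gcd_eq_right hd,
      card_zmultiples_natCast_div hd]

omit [NeZero n] in
lemma card_dvd_of_addSubgroup_zmod (K : AddSubgroup (ZMod n)) : Nat.card K ∣ n := by
  simpa using K.card_addSubgroup_dvd_card

lemma eq_zmultiples_natCast_div_card (K : AddSubgroup (ZMod n)) :
    K = zmultiples ((n / Nat.card K : ℕ) : ZMod n) := by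
  have hK := card_dvd_of_addSubgroup_zmod K
  rw [zmultiples_natCast_div_eq_ker hK]
  refine eq_of_le_of_card_ge (fun x hx => ?_) ?_
  · exact congrArg Subtype.val (card_nsmul_eq_zero' (x := (⟨x, hx⟩ : K)))
  · rw [IsAddCyclic.card_nsmulAddMonoidHom_ker, Nat.card_zmod, Nat.gcd_eq_right hK]

end CyclicSubgroups

section Products

variable {G₁ G₂ : Type*} [AddGroup G₁] [AddGroup G₂]

lemma card_eq_card_map_fst_mul_card_comap_inr (H : AddSubgroup (G₁ × G₂)) :
    Nat.card H = Nat.card (H.map (AddMonoidHom.fst G₁ G₂)) *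
      Nat.card (H.comap (AddMonoidHom.inr G₁ G₂)) := by
  let f := (AddMonoidHom.fst G₁ G₂).comp H.subtype
  let e : f.ker ≃ H.comap (AddMonoidHom.inr G₁ G₂) :=
    { toFun := fun h => ⟨h.1.1.2, by
        have : (h.1.1.1, h.1.1.2) ∈ H := h.1.2
        rwa [show h.1.1.1 = 0 from h.2] at this⟩
      invFun := fun z => ⟨⟨(0, z), z.2⟩, rfl⟩
      left_inv := fun h => by
        ext
        · exact (show h.1.1.1 = 0 from h.2).symm
        · rfl
      right_inv := fun _ => rfl }
  rw [← f.ker.card_mul_index, index_ker, AddMonoidHom.range_comp, range_subtype,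
    Nat.card_congr e, mul_comm]

lemma exponent_eq_lcm_map_fst_map_snd (H : AddSubgroup (G₁ × G₂)) :
    AddMonoid.exponent H = Nat.lcm (AddMonoid.exponent (H.map (AddMonoidHom.fst G₁ G₂)))
      (AddMonoid.exponent (H.map (AddMonoidHom.snd G₁ G₂))) := by
  refine Nat.dvd_antisymm ?_ (Nat.lcm_dvd ?_ ?_)
  · let f : H →+ H.map (AddMonoidHom.fst G₁ G₂) × H.map (AddMonoidHom.snd G₁ G₂) :=
      ((AddMonoidHom.fst G₁ G₂).addSubgroupMap H).prod ((AddMonoidHom.snd G₁ G₂).addSubgroupMap H)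
    have hf : Injective f := fun a b hab =>
      Subtype.ext (Prod.ext (congrArg (·.1.1) hab) (congrArg (·.2.1) hab))
    simpa [AddMonoid.exponent_prod, lcm_eq_nat_lcm] using
      AddMonoid.exponent_dvd_of_addMonoidHom f hf
  · exact AddMonoidHom.exponent_dvd (AddMonoidHom.addSubgroupMap_surjective _ H)
  · exact AddMonoidHom.exponent_dvd (AddMonoidHom.addSubgroupMap_surjective _ H)

lemma exists_zsmul_eq_of_mem {H : AddSubgroup (G₁ × G₂)} {a : G₁} {b : G₂}
    (ha : H.map (AddMonoidHom.fst G₁ G₂) = zmultiples a)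
    (hb : H.map (AddMonoidHom.snd G₁ G₂) = zmultiples b) {p : G₁ × G₂} (hp : p ∈ H) :
    ∃ x y : ℤ, (x • a, y • b) = p := by
  obtain ⟨x, hx⟩ : p.1 ∈ zmultiples a := ha ▸ mem_map_of_mem _ hp
  obtain ⟨y, hy⟩ : p.2 ∈ zmultiples b := hb ▸ mem_map_of_mem _ hp
  exact ⟨x, y, Prod.ext hx hy⟩

end Products

lemma nonempty_addEquiv_zmod_prod_of_generators {G : Type*} [AddCommGroup G] [Finite G]
    {A B : ℕ} {u v : G} (hu : A • u = 0) (hv : B • v = 0)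
    (hspan : ∀ g : G, ∃ s t : ℤ, s • u + t • v = g) (hcard : Nat.card G = A * B) :
    Nonempty (G ≃+ ZMod A × ZMod B) := by
  let f : ZMod A × ZMod B →+ G :=
    (ZMod.lift A ⟨zmultiplesHom G u, by simpa using hu⟩).coprod
      (ZMod.lift B ⟨zmultiplesHom G v, by simpa using hv⟩)
  have hf : Surjective f := fun g => by
    obtain ⟨s, t, rfl⟩ := hspan g
    exact ⟨(s, t), by simp [f]⟩
  have hcard' : Nat.card (ZMod A × ZMod B) = Nat.card G := by
    rw [Nat.card_prod, Nat.card_zmod, Nat.card_zmod, hcard]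
  have : Finite (ZMod A × ZMod B) := Nat.finite_of_card_ne_zero (hcard' ▸ Nat.card_pos.ne')
  exact ⟨(AddEquiv.ofBijective f (hf.bijective_of_nat_card_le hcard'.le)).symm⟩

def goursatSubgroup (m n i j q : ℕ) (r : ZMod q) : AddSubgroup (ZMod m × ZMod n) where
  carrier := {p | ∃ x y : ℤ,
    (x • ((m / i : ℕ) : ZMod m), y • ((n / j : ℕ) : ZMod n)) = p ∧ (x : ZMod q) * r = y}
  zero_mem' := ⟨0, 0, by simp, by simp⟩
  add_mem' := by
    rintro _ _ ⟨x, y, rfl, h⟩ ⟨x', y', rfl, h'⟩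
    exact ⟨x + x', y + y', by simp [add_smul], by push_cast; rw [add_mul, h, h']⟩
  neg_mem' := by
    rintro _ ⟨x, y, rfl, h⟩
    exact ⟨-x, -y, by simp [neg_smul], by push_cast; rw [neg_mul, h]⟩

section Goursat

variable {m n i j q : ℕ} {r : ZMod q}

lemma mem_goursatSubgroup {p : ZMod m × ZMod n} :
    p ∈ goursatSubgroup m n i j q r ↔ ∃ x y : ℤ,
      (x • ((m / i : ℕ) : ZMod m), y • ((n / j : ℕ) : ZMod n)) = p ∧ (x : ZMod q) * r = y :=
  Iff.rfl

lemma map_fst_goursatSubgroup :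
    (goursatSubgroup m n i j q r).map (AddMonoidHom.fst _ _) =
      zmultiples ((m / i : ℕ) : ZMod m) := by
  ext a
  simp only [mem_map, mem_goursatSubgroup, mem_zmultiples_iff]
  constructor
  · rintro ⟨_, ⟨x, y, rfl, -⟩, rfl⟩
    exact ⟨x, rfl⟩
  · rintro ⟨x, rfl⟩
    obtain ⟨y, hy⟩ := ZMod.intCast_surjective ((x : ZMod q) * r)
    exact ⟨_, ⟨x, y, rfl, hy.symm⟩, rfl⟩

lemma map_snd_goursatSubgroup (hr : IsUnit r) :
    (goursatSubgroup m n i j q r).map (AddMonoidHom.snd _ _) =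
      zmultiples ((n / j : ℕ) : ZMod n) := by
  ext b
  simp only [mem_map, mem_goursatSubgroup, mem_zmultiples_iff]
  constructor
  · rintro ⟨_, ⟨x, y, rfl, -⟩, rfl⟩
    exact ⟨y, rfl⟩
  · rintro ⟨y, rfl⟩
    obtain ⟨x, hx⟩ := ZMod.intCast_surjective ((y : ZMod q) * ((hr.unit⁻¹ : (ZMod q)ˣ) : ZMod q))
    exact ⟨_, ⟨x, y, rfl, by rw [hx, mul_assoc, hr.val_inv_mul, mul_one]⟩, rfl⟩

variable [NeZero m]

lemma comap_inr_goursatSubgroup (hi : i ∣ m) (hqi : q ∣ i) :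
    (goursatSubgroup m n i j q r).comap (AddMonoidHom.inr _ _) =
      zmultiples (q • ((n / j : ℕ) : ZMod n)) := by
  ext b
  simp only [mem_comap, AddMonoidHom.inr_apply, mem_goursatSubgroup, mem_zmultiples_iff]
  constructor
  · rintro ⟨x, y, hxy, h⟩
    obtain ⟨hx, rfl⟩ := Prod.mk.inj hxy
    have hqx : (x : ZMod q) = 0 := (ZMod.intCast_zmod_eq_zero_iff_dvd x q).2
      ((Int.natCast_dvd_natCast.2 hqi).trans ((zsmul_natCast_div_eq_zero_iff hi x).1 hx))
    obtain ⟨t, rfl⟩ : (q : ℤ) ∣ y := by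
      rw [← ZMod.intCast_zmod_eq_zero_iff_dvd, ← h, hqx, zero_mul]
    exact ⟨t, by rw [mul_comm, mul_zsmul, natCast_zsmul]⟩
  · rintro ⟨t, rfl⟩
    exact ⟨0, q * t, by rw [zero_smul, mul_comm, mul_zsmul, natCast_zsmul], by simp⟩

variable [NeZero n]

lemma nsmul_mk_eq_zero (hi : i ∣ m) (hj : j ∣ n) {a : ℕ} {x y : ℤ} (hx : (i : ℤ) ∣ a * x)
    (hy : (j : ℤ) ∣ a * y) : a • (x • ((m / i : ℕ) : ZMod m), y • ((n / j : ℕ) : ZMod n)) = 0 := by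
  rw [← natCast_zsmul, Prod.smul_mk, smul_smul, smul_smul,
    (zsmul_natCast_div_eq_zero_iff hi _).2 hx, (zsmul_natCast_div_eq_zero_iff hj _).2 hy,
    Prod.mk_zero_zero]

lemma card_goursatSubgroup (hi : i ∣ m) (hj : j ∣ n) (hqi : q ∣ i) (hqj : q ∣ j) :
    Nat.card (goursatSubgroup m n i j q r) = i * (j / q) := by
  rw [card_eq_card_map_fst_mul_card_comap_inr, map_fst_goursatSubgroup,
    comap_inr_goursatSubgroup hi hqi, card_zmultiples_natCast_div hi, Nat.card_zmultiples,
    addOrderOf_nsmul,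
    addOrderOf_natCast_div hj, Nat.gcd_eq_right hqj]

lemma mk_mem_goursatSubgroup_iff (hi : i ∣ m) (hj : j ∣ n) (hqi : q ∣ i) (hqj : q ∣ j) (x y : ℤ) :
    (x • ((m / i : ℕ) : ZMod m), y • ((n / j : ℕ) : ZMod n)) ∈ goursatSubgroup m n i j q r ↔
      (x : ZMod q) * r = y := by
  refine ⟨?_, fun h => ⟨x, y, rfl, h⟩⟩
  rintro ⟨x', y', hxy, h⟩
  obtain ⟨hx, hy⟩ := Prod.mk.inj hxy
  have hix := (zsmul_natCast_div_eq_zero_iff hi (x - x')).1 (by rw [sub_smul, hx, sub_self])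
  have hjy := (zsmul_natCast_div_eq_zero_iff hj (y - y')).1 (by rw [sub_smul, hy, sub_self])
  rwa [(ZMod.intCast_eq_intCast_iff_dvd_sub x' x q).2 ((Int.natCast_dvd_natCast.2 hqi).trans hix),
    (ZMod.intCast_eq_intCast_iff_dvd_sub y' y q).2 ((Int.natCast_dvd_natCast.2 hqj).trans hjy)] at h

end Goursat

lemma exists_coprime_natCast_eq_unit {q j : ℕ} [NeZero j] (hqj : q ∣ j) (r : (ZMod q)ˣ) :
    ∃ y : ℕ, y.Coprime j ∧ (y : ZMod q) = r := by
  obtain ⟨Y, rfl⟩ := ZMod.unitsMap_surjective hqj r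
  exact ⟨(Y : ZMod j).val, ZMod.val_coe_unit_coprime Y,
    by simp [ZMod.unitsMap_def, ZMod.natCast_val]⟩

lemma exists_dvd_mul_and_dvd_mul_sub {i j q A y : ℕ} (hAi : A ∣ i) (hAq : A * q = Nat.gcd i j)
    (hy : y.Coprime j) : ∃ c : ℤ, (i : ℤ) ∣ A * c ∧ (j : ℤ) ∣ A * (q - c * y) := by
  obtain ⟨i', rfl⟩ := hAi
  have hbezout := Nat.gcd_eq_gcd_ab (A * i' * y) j
  rw [hy.gcd_mul_right_cancel, ← hAq] at hbezout
  refine ⟨i' * Nat.gcdA (A * i' * y) j, ⟨Nat.gcdA (A * i' * y) j, by push_cast; ring⟩,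
    ⟨Nat.gcdB (A * i' * y) j, ?_⟩⟩
  push_cast at hbezout ⊢
  linear_combination hbezout

lemma mul_div_eq_of_gcd_lcm {i j q A B : ℕ} (hq : q ≠ 0) (hqj : q ∣ j) (hlcm : Nat.lcm i j = B)
    (hAq : A * q = Nat.gcd i j) : i * (j / q) = A * B := by
  refine Nat.eq_of_mul_eq_mul_right (Nat.pos_of_ne_zero hq) ?_
  rw [mul_assoc, Nat.div_mul_cancel hqj, ← Nat.gcd_mul_lcm i j, ← hAq, hlcm]
  ring

lemma nonempty_goursatSubgroup_addEquiv {m n i j q A B : ℕ} [NeZero m] [NeZero n] (hi : i ∣ m)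
    (hj : j ∣ n) (hlcm : Nat.lcm i j = B) (hAq : A * q = Nat.gcd i j) (r : (ZMod q)ˣ) :
    Nonempty (goursatSubgroup m n i j q r ≃+ ZMod A × ZMod B) := by
  have hqi : q ∣ i := (Dvd.intro_left A hAq).trans (Nat.gcd_dvd_left i j)
  have hqj : q ∣ j := (Dvd.intro_left A hAq).trans (Nat.gcd_dvd_right i j)
  have hAi : A ∣ i := (Dvd.intro q hAq).trans (Nat.gcd_dvd_left i j)
  have hq : q ≠ 0 := right_ne_zero_of_mul <|
    hAq ▸ Nat.gcd_ne_zero_left (ne_zero_of_dvd_ne_zero (NeZero.ne m) hi)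
  have : NeZero j := ⟨ne_zero_of_dvd_ne_zero (NeZero.ne n) hj⟩
  obtain ⟨y, hyj, hyr⟩ := exists_coprime_natCast_eq_unit hqj r
  obtain ⟨c, hic, hjc⟩ := exists_dvd_mul_and_dvd_mul_sub hAi hAq hyj
  -- a basis: `v` of order `lcm i j = B`, and `u = (0, q • (n / j)) - c • v` of order `A`
  have hv : ((1 : ℤ) • ((m / i : ℕ) : ZMod m), (y : ℤ) • ((n / j : ℕ) : ZMod n)) ∈
      goursatSubgroup m n i j q r := ⟨1, y, rfl, by push_cast; rw [one_mul, hyr]⟩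
  have hu : ((-c) • ((m / i : ℕ) : ZMod m), (q - c * y) • ((n / j : ℕ) : ZMod n)) ∈
      goursatSubgroup m n i j q r := ⟨-c, q - c * y, rfl, by push_cast; rw [hyr]; simp⟩
  refine nonempty_addEquiv_zmod_prod_of_generators (u := ⟨_, hu⟩) (v := ⟨_, hv⟩) ?_ ?_ ?_ ?_
  · exact Subtype.ext (nsmul_mk_eq_zero hi hj (by simpa using hic.neg_right) hjc)
  · have hiB : (i : ℤ) ∣ B := Int.natCast_dvd_natCast.2 (hlcm ▸ Nat.dvd_lcm_left i j)
    have hjB : (j : ℤ) ∣ B := Int.natCast_dvd_natCast.2 (hlcm ▸ Nat.dvd_lcm_right i j)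
    exact Subtype.ext (nsmul_mk_eq_zero hi hj (by simpa using hiB) (hjB.mul_right _))
  · rintro ⟨_, x, y', rfl, h⟩
    obtain ⟨w, hw⟩ : (q : ℤ) ∣ y' - x * y := by
      rw [← ZMod.intCast_eq_intCast_iff_dvd_sub]
      push_cast
      rw [hyr, h]
    refine ⟨w, x + c * w, Subtype.ext (Prod.ext ?_ ?_)⟩
    · simp only [coe_add, coe_zsmul, Prod.fst_add, Prod.smul_fst]
      module
    · simp only [coe_add, coe_zsmul, Prod.snd_add, Prod.smul_snd]
      rw [show y' = x * y + q * w by linarith]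
      module
  · rw [card_goursatSubgroup hi hj hqi hqj, mul_div_eq_of_gcd_lcm hq hqj hlcm hAq]

section Existence

variable {m n i j q : ℕ} [NeZero n] {H : AddSubgroup (ZMod m × ZMod n)}

lemma intCast_mul_eq_of_mem (hj : j ∣ n)
    (hq : Nat.card (H.comap (AddMonoidHom.inr _ _)) * q = j) {x y y₀ : ℤ}
    (hp₀ : (((m / i : ℕ) : ZMod m), y₀ • ((n / j : ℕ) : ZMod n)) ∈ H)
    (hp : (x • ((m / i : ℕ) : ZMod m), y • ((n / j : ℕ) : ZMod n)) ∈ H) :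
    (x : ZMod q) * y₀ = y := by
  set K := H.comap (AddMonoidHom.inr _ _)
  -- `p - x • p₀` lies in `0 × K`, which is killed by `#K = j / q`
  have hK : (y - x * y₀) • ((n / j : ℕ) : ZMod n) ∈ K := by
    show ((0 : ZMod m), (y - x * y₀) • ((n / j : ℕ) : ZMod n)) ∈ H
    convert H.sub_mem hp (H.zsmul_mem hp₀ x) using 1
    ext <;> simp [sub_smul, mul_smul]
  have hkill : ((Nat.card K * (y - x * y₀) : ℤ)) • ((n / j : ℕ) : ZMod n) = 0 := by
    rw [mul_smul, natCast_zsmul]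
    exact congrArg Subtype.val (card_nsmul_eq_zero' (x := (⟨_, hK⟩ : K)))
  rw [zsmul_natCast_div_eq_zero_iff hj, ← hq, Nat.cast_mul] at hkill
  have hk : (Nat.card K : ℤ) ≠ 0 := Nat.cast_ne_zero.2 Nat.card_pos.ne'
  exact_mod_cast (ZMod.intCast_eq_intCast_iff_dvd_sub _ _ _).2
    (Int.dvd_of_mul_dvd_mul_left hk hkill)

variable [NeZero m]

lemma dvd_of_mem_of_isUnit (hi : i ∣ m) (hj : j ∣ n)
    (hq : Nat.card (H.comap (AddMonoidHom.inr _ _)) * q = j) {y₀ : ℤ}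
    (hp₀ : (((m / i : ℕ) : ZMod m), y₀ • ((n / j : ℕ) : ZMod n)) ∈ H)
    (hy₀ : IsUnit (y₀ : ZMod q)) : q ∣ i := by
  have hp : ((0 : ℤ) • ((m / i : ℕ) : ZMod m), ((i : ℤ) * y₀) • ((n / j : ℕ) : ZMod n)) ∈ H := by
    convert H.zsmul_mem hp₀ i using 1
    ext <;> simp [mul_smul, (zsmul_natCast_div_eq_zero_iff hi _).2 dvd_rfl]
  have := intCast_mul_eq_of_mem hj hq hp₀ hp
  push_cast at this
  rw [← ZMod.natCast_eq_zero_iff, ← hy₀.mul_left_eq_zero, ← this, zero_mul]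

lemma exists_eq_goursatSubgroup (hi : Nat.card (H.map (AddMonoidHom.fst _ _)) = i)
    (hj : Nat.card (H.map (AddMonoidHom.snd _ _)) = j)
    (hq : Nat.card (H.comap (AddMonoidHom.inr _ _)) * q = j) :
    ∃ r : (ZMod q)ˣ, H = goursatSubgroup m n i j q r := by
  have hC₁ := eq_zmultiples_natCast_div_card (H.map (AddMonoidHom.fst _ _))
  have hC₂ := eq_zmultiples_natCast_div_card (H.map (AddMonoidHom.snd _ _))
  rw [hi] at hC₁
  rw [hj] at hC₂
  have him : i ∣ m := hi ▸ card_dvd_of_addSubgroup_zmod _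
  have hjn : j ∣ n := hj ▸ card_dvd_of_addSubgroup_zmod _
  obtain ⟨p₀, hp₀, hp₀1⟩ := mem_map.1 (hC₁ ▸ mem_zmultiples ((m / i : ℕ) : ZMod m))
  obtain ⟨x₀, y₀, rfl⟩ := exists_zsmul_eq_of_mem hC₁ hC₂ hp₀
  rw [show x₀ • ((m / i : ℕ) : ZMod m) = _ from hp₀1] at hp₀
  obtain ⟨p₁, hp₁, hp₁2⟩ := mem_map.1 (hC₂ ▸ mem_zmultiples ((n / j : ℕ) : ZMod n))
  obtain ⟨x₁, y₁, rfl⟩ := exists_zsmul_eq_of_mem hC₁ hC₂ hp₁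
  rw [show y₁ • ((n / j : ℕ) : ZMod n) = (1 : ℤ) • _ from hp₁2.trans (one_smul ℤ _).symm] at hp₁
  have hr : (y₀ : ZMod q) * x₁ = 1 := by
    rw [mul_comm, intCast_mul_eq_of_mem hjn hq hp₀ hp₁, Int.cast_one]
  let r := Units.mkOfMulEqOne _ _ hr
  have hle : H ≤ goursatSubgroup m n i j q r := fun p hp => by
    obtain ⟨x, y, rfl⟩ := exists_zsmul_eq_of_mem hC₁ hC₂ hp
    exact ⟨x, y, rfl, intCast_mul_eq_of_mem hjn hq hp₀ hp⟩
  have hqi : q ∣ i := dvd_of_mem_of_isUnit him hjn hq hp₀ r.isUnit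
  have hq0 : 0 < q := Nat.pos_of_mul_pos_left (hq ▸ hj ▸ Nat.card_pos)
  refine ⟨r, eq_of_le_of_card_ge hle ?_⟩
  rw [card_goursatSubgroup him hjn hqi (Dvd.intro_left _ hq),
    card_eq_card_map_fst_mul_card_comap_inr H, hi, ← hq, Nat.mul_div_cancel _ hq0]

end Existence

section Parameters

variable {m n : ℕ} [NeZero m] [NeZero n]

lemma eq_and_eq_of_goursatSubgroup_eq {i j q i' j' q' : ℕ} {r : (ZMod q)ˣ} {r' : (ZMod q')ˣ}
    (hi : i ∣ m) (hj : j ∣ n) (hi' : i' ∣ m) (hj' : j' ∣ n)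
    (h : goursatSubgroup m n i j q r = goursatSubgroup m n i' j' q' r') : i = i' ∧ j = j' := by
  have h₁ := congrArg (fun H => Nat.card (H.map (AddMonoidHom.fst _ _))) h
  have h₂ := congrArg (fun H => Nat.card (H.map (AddMonoidHom.snd _ _))) h
  simp only [map_fst_goursatSubgroup, map_snd_goursatSubgroup r.isUnit,
    map_snd_goursatSubgroup r'.isUnit, card_zmultiples_natCast_div, hi, hj, hi', hj'] at h₁ h₂
  exact ⟨h₁, h₂⟩

lemma eq_of_goursatSubgroup_eq {i j q : ℕ} {r r' : ZMod q} (hi : i ∣ m) (hj : j ∣ n) (hqi : q ∣ i)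
    (hqj : q ∣ j) (h : goursatSubgroup m n i j q r = goursatSubgroup m n i j q r') : r = r' := by
  obtain ⟨y, rfl⟩ := ZMod.intCast_surjective r
  have hmem := (mk_mem_goursatSubgroup_iff (r := (y : ZMod q)) hi hj hqi hqj 1 y).2 (by simp)
  rw [h, mk_mem_goursatSubgroup_iff hi hj hqi hqj] at hmem
  simpa using hmem.symm

lemma exists_goursatSubgroup_eq_of_addEquiv {A B : ℕ} (hAB : A ∣ B)
    {H : AddSubgroup (ZMod m × ZMod n)} (e : H ≃+ ZMod A × ZMod B) :
    ∃ i j : ℕ, i ∣ m ∧ j ∣ n ∧ A * B ∣ i * j ∧ Nat.lcm i j = B ∧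
      ∃ r : (ZMod (i * j / (A * B)))ˣ, H = goursatSubgroup m n i j (i * j / (A * B)) r := by
  set i := Nat.card (H.map (AddMonoidHom.fst _ _))
  set j := Nat.card (H.map (AddMonoidHom.snd _ _))
  set k := Nat.card (H.comap (AddMonoidHom.inr _ _))
  have hkj : k ∣ j := card_dvd_of_le fun z hz => ⟨(0, z), hz, rfl⟩
  obtain ⟨r, hr⟩ := exists_eq_goursatSubgroup rfl rfl (Nat.mul_div_cancel' hkj)
  have hcard : i * k = A * B := by
    rw [← card_eq_card_map_fst_mul_card_comap_inr, Nat.card_congr e.toEquiv, Nat.card_prod,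
      Nat.card_zmod, Nat.card_zmod]
  have hlcm : Nat.lcm i j = B := by
    have hexp := AddMonoid.exponent_eq_of_addEquiv e
    rwa [exponent_eq_lcm_map_fst_map_snd, IsAddCyclic.exponent_eq_card,
      IsAddCyclic.exponent_eq_card, AddMonoid.exponent_prod, ZMod.exponent, ZMod.exponent,
      lcm_eq_nat_lcm,
      Nat.lcm_eq_right hAB] at hexp
  have hij : i * j = A * B * (j / k) := by rw [← hcard, mul_assoc, Nat.mul_div_cancel' hkj]
  have hAB0 : 0 < A * B := hcard ▸ Nat.mul_pos Nat.card_pos Nat.card_pos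
  refine ⟨i, j, card_dvd_of_addSubgroup_zmod _, card_dvd_of_addSubgroup_zmod _, ⟨_, hij⟩, hlcm, ?_⟩
  rw [hij, Nat.mul_div_cancel_left _ hAB0]
  exact ⟨r, hr⟩

end Parameters

lemma mul_div_mul_eq_gcd {i j A B : ℕ} (hi : i ≠ 0) (hj : j ≠ 0) (hd : A * B ∣ i * j)
    (hlcm : Nat.lcm i j = B) : A * (i * j / (A * B)) = Nat.gcd i j := by
  have hB : 0 < B := hlcm ▸ Nat.pos_of_ne_zero (Nat.lcm_ne_zero hi hj)
  refine Nat.eq_of_mul_eq_mul_right hB ?_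
  rw [mul_right_comm, Nat.mul_div_cancel' hd, ← hlcm, Nat.gcd_mul_lcm]

def admissiblePairs (m n A B : ℕ) : Finset (ℕ × ℕ) :=
  (m.divisors ×ˢ n.divisors).filter (fun ij => A * B ∣ ij.1 * ij.2 ∧ Nat.lcm ij.1 ij.2 = B)

section Counting

variable {m n A B : ℕ} [NeZero m] [NeZero n]

lemma mem_admissiblePairs {ij : ℕ × ℕ} : ij ∈ admissiblePairs m n A B ↔
    ij.1 ∣ m ∧ ij.2 ∣ n ∧ A * B ∣ ij.1 * ij.2 ∧ Nat.lcm ij.1 ij.2 = B := by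
  simp [admissiblePairs, NeZero.ne, and_assoc]

lemma mul_div_mul_eq_gcd_of_mem_admissiblePairs {ij : ℕ × ℕ} (h : ij ∈ admissiblePairs m n A B) :
    A * (ij.1 * ij.2 / (A * B)) = Nat.gcd ij.1 ij.2 := by
  obtain ⟨hi, hj, hd, hlcm⟩ := mem_admissiblePairs.1 h
  exact mul_div_mul_eq_gcd (ne_zero_of_dvd_ne_zero (NeZero.ne m) hi)
    (ne_zero_of_dvd_ne_zero (NeZero.ne n) hj) hd hlcm

lemma div_ne_zero_of_mem_admissiblePairs {ij : ℕ × ℕ} (h : ij ∈ admissiblePairs m n A B) :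
    ij.1 * ij.2 / (A * B) ≠ 0 := by
  refine right_ne_zero_of_mul (a := A) ?_
  rw [mul_div_mul_eq_gcd_of_mem_admissiblePairs h]
  exact Nat.gcd_ne_zero_left (ne_zero_of_dvd_ne_zero (NeZero.ne m) (mem_admissiblePairs.1 h).1)

theorem card_addSubgroups_addEquiv_eq_card_sigma (hAB : A ∣ B) :
    Nat.card {H : AddSubgroup (ZMod m × ZMod n) // Nonempty (H ≃+ (ZMod A × ZMod B))} =
      Nat.card (Σ ij : admissiblePairs m n A B, (ZMod (ij.1.1 * ij.1.2 / (A * B)))ˣ) := by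
  have hS {ij} (h : ij ∈ admissiblePairs m n A B) := mem_admissiblePairs.1 h
  have hgcd {ij} (h : ij ∈ admissiblePairs m n A B) := mul_div_mul_eq_gcd_of_mem_admissiblePairs h
  refine (Nat.card_eq_of_bijective (fun p => ⟨goursatSubgroup m n p.1.1.1 p.1.1.2 _
      (p.2 : ZMod (p.1.1.1 * p.1.1.2 / (A * B))), nonempty_goursatSubgroup_addEquiv
      (hS p.1.2).1 (hS p.1.2).2.1 (hS p.1.2).2.2.2 (hgcd p.1.2) p.2⟩) ⟨?_, ?_⟩).symm
  · rintro ⟨⟨⟨i, j⟩, hij⟩, r⟩ ⟨⟨⟨i', j'⟩, hij'⟩, r'⟩ h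
    obtain ⟨hi, hj, -, -⟩ := hS hij
    obtain ⟨rfl, rfl⟩ := eq_and_eq_of_goursatSubgroup_eq hi hj (hS hij').1 (hS hij').2.1
      (congrArg Subtype.val h)
    obtain rfl := Units.ext <| eq_of_goursatSubgroup_eq hi hj
      ((Dvd.intro_left _ (hgcd hij)).trans (Nat.gcd_dvd_left i j))
      ((Dvd.intro_left _ (hgcd hij)).trans (Nat.gcd_dvd_right i j)) (congrArg Subtype.val h)
    rfl
  · rintro ⟨H, ⟨e⟩⟩
    obtain ⟨i, j, hi, hj, hd, hlcm, r, rfl⟩ := exists_goursatSubgroup_eq_of_addEquiv hAB e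
    exact ⟨⟨⟨(i, j), mem_admissiblePairs.2 ⟨hi, hj, hd, hlcm⟩⟩, r⟩, rfl⟩

end Counting

theorem subgroup_count_of_isomorphism_type_general (m n A B : ℕ) (hm : 0 < m) (hn : 0 < n)
    (hAB : A ∣ B) :
    Nat.card {H : AddSubgroup (ZMod m × ZMod n) // Nonempty (H ≃+ (ZMod A × ZMod B))} =
      ∑ ij ∈ (m.divisors ×ˢ n.divisors).filter
          (fun ij => A * B ∣ ij.1 * ij.2 ∧ Nat.lcm ij.1 ij.2 = B),
        Nat.totient (ij.1 * ij.2 / (A * B)) := by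
  have : NeZero m := NeZero.of_pos hm
  have : NeZero n := NeZero.of_pos hn
  rw [card_addSubgroups_addEquiv_eq_card_sigma hAB, Nat.card_sigma, Finset.sum_coe_sort
    (admissiblePairs m n A B) fun ij => Nat.card (ZMod (ij.1 * ij.2 / (A * B)))ˣ]
  refine Finset.sum_congr rfl fun ij hij => ?_
  have : NeZero (ij.1 * ij.2 / (A * B)) := ⟨div_ne_zero_of_mem_admissiblePairs hij⟩
  rw [Nat.card_eq_fintype_card, ZMod.card_units_eq_totient]

theorem subgroup_count_of_isomorphism_type (m n A B : ℕ) (hm : 0 < m) (hn : 0 < n)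
    (hA : 0 < A) (hB : 0 < B) (hAB : A ∣ B) (hABmn : A * B ∣ m * n)
    (h : A ∣ Nat.gcd m n) :
    Nat.card {H : AddSubgroup (ZMod m × ZMod n) // Nonempty (H ≃+ (ZMod A × ZMod B))} =
      ∑ ij ∈ (m.divisors ×ˢ n.divisors).filter
          (fun ij => A * B ∣ ij.1 * ij.2 ∧ Nat.lcm ij.1 ij.2 = B),
        Nat.totient (ij.1 * ij.2 / (A * B)) :=
  subgroup_count_of_isomorphism_type_general m n A B hm hn hAB
end
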